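/- arXiv:2303.05240 — 7 statements merged into one kernel-verified Lean document; each statement's English description precedes it below -/
import Mathlib

section
/- For every γ > 0 and every finite signed Borel measure μ on the unit sphere S^d (d ≥ 1), the Gaussian energy satisfies I_{G_γ}[μ] ≥ 0, and I_{G_γ}[μ] = 0 holds only if μ = 0. (That is, the Gaussian kernel G_γ is strictly positive definite on S^d × S^d.) -/
open MeasureTheory

noncomputable section

/-- The unit sphere `S^d ⊆ ℝ^{d+1}`. -/
abbrev Sph (d : ℕ) := Metric.sphere (0 : EuclideanSpace ℝ (Fin (d+1))) 1

/-- The Gaussian kernel `G_γ(u,v) = exp(-γ‖u-v‖₂²)` on `S^d × S^d`. -/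
def gaussK (d : ℕ) (γ : ℝ) : Sph d → Sph d → ℝ := fun u v =>
  Real.exp (-γ * ‖(u : EuclideanSpace ℝ (Fin (d+1))) - (v : EuclideanSpace ℝ (Fin (d+1)))‖ ^ 2)

/-- Mutual energy `I_K[μ, ν] = ∬ K(u,v) dμ(u) dν(v)` of two Borel measures on `S^d`. -/
def mutualEnergy {d : ℕ} (K : Sph d → Sph d → ℝ) (μ ν : Measure (Sph d)) : ℝ :=
  ∫ u, ∫ v, K u v ∂ν ∂μ

/-- Energy of a finite signed Borel measure `s` with Jordan decomposition `s = s⁺ − s⁻`: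
`I_K[s] = I_K[s⁺, s⁺] + I_K[s⁻, s⁻] − 2 I_K[s⁺, s⁻]`. -/
def signedEnergy {d : ℕ} (K : Sph d → Sph d → ℝ) (s : SignedMeasure (Sph d)) : ℝ :=
  mutualEnergy K s.toJordanDecomposition.posPart s.toJordanDecomposition.posPart
  + mutualEnergy K s.toJordanDecomposition.negPart s.toJordanDecomposition.negPart
  - 2 * mutualEnergy K s.toJordanDecomposition.posPart s.toJordanDecomposition.negPart

namespace GaussAux

variable {d : ℕ}

/-- generic integrability of continuous functions on a compact space -/
lemma integrable_of_continuous {X : Type*} [MeasurableSpace X] [TopologicalSpace X]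
    [OpensMeasurableSpace X] [T2Space X] [CompactSpace X] (μ : Measure X) [IsFiniteMeasure μ]
    {f : X → ℝ} (hf : Continuous f) : Integrable f μ := by
  have h := hf.continuousOn.integrableOn_compact (isCompact_univ (X := X)) (μ := μ)
  rwa [IntegrableOn, Measure.restrict_univ] at h

/-- coordinate bound on the sphere -/
lemma abs_coord_le_one (u : Sph d) (i : Fin (d+1)) :
    |(u : EuclideanSpace ℝ (Fin (d+1))) i| ≤ 1 := by
  have hu : ‖(u : EuclideanSpace ℝ (Fin (d+1)))‖ = 1 := by
    simpa using mem_sphere_zero_iff_norm.mp u.2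
  have h1 : |(u : EuclideanSpace ℝ (Fin (d+1))) i|
      = Real.sqrt (((u : EuclideanSpace ℝ (Fin (d+1))) i) ^ 2) :=
    (Real.sqrt_sq_eq_abs _).symm
  have h2 : ((u : EuclideanSpace ℝ (Fin (d+1))) i) ^ 2
      ≤ ∑ j, ‖(u : EuclideanSpace ℝ (Fin (d+1))) j‖ ^ 2 := by
    have := Finset.single_le_sum
      (f := fun j => ‖(u : EuclideanSpace ℝ (Fin (d+1))) j‖ ^ 2)
      (fun j _ => by positivity) (Finset.mem_univ i)
    simpa [sq_abs] using this
  calc |(u : EuclideanSpace ℝ (Fin (d+1))) i|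
      = Real.sqrt (((u : EuclideanSpace ℝ (Fin (d+1))) i) ^ 2) := h1
    _ ≤ Real.sqrt (∑ j, ‖(u : EuclideanSpace ℝ (Fin (d+1))) j‖ ^ 2) := Real.sqrt_le_sqrt h2
    _ = 1 := by rw [← EuclideanSpace.norm_eq, hu]

/-- monomial on the sphere -/
def mono (d k : ℕ) (f : Fin k → Fin (d+1)) : Sph d → ℝ :=
  fun u => ∏ j, (u : EuclideanSpace ℝ (Fin (d+1))) (f j)

lemma continuous_mono (k : ℕ) (f : Fin k → Fin (d+1)) : Continuous (mono d k f) := by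
  apply continuous_finset_prod
  intro j _
  exact (EuclideanSpace.proj (f j)).continuous.comp continuous_subtype_val

lemma abs_mono_le_one (k : ℕ) (f : Fin k → Fin (d+1)) (u : Sph d) : |mono d k f u| ≤ 1 := by
  rw [mono, Finset.abs_prod]
  calc ∏ j, |(u : EuclideanSpace ℝ (Fin (d+1))) (f j)| ≤ ∏ _j : Fin k, 1 :=
        Finset.prod_le_prod (fun j _ => abs_nonneg _) (fun j _ => abs_coord_le_one u (f j))
    _ = 1 := by simp

/-- inner product expansion -/
lemma inner_pow_eq (u v : Sph d) (k : ℕ) :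
    (inner ℝ (u : EuclideanSpace ℝ (Fin (d+1))) (v : EuclideanSpace ℝ (Fin (d+1))) : ℝ) ^ k
      = ∑ f : Fin k → Fin (d+1), mono d k f u * mono d k f v := by
  have hi : (inner ℝ (u : EuclideanSpace ℝ (Fin (d+1))) (v : EuclideanSpace ℝ (Fin (d+1))) : ℝ)
      = ∑ i, (u : EuclideanSpace ℝ (Fin (d+1))) i * (v : EuclideanSpace ℝ (Fin (d+1))) i := by
    simp [PiLp.inner_apply, RCLike.inner_apply, mul_comm]
  rw [hi, ← Fin.prod_const k, Finset.prod_univ_sum]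
  refine Finset.sum_congr rfl fun f _ => ?_
  rw [mono, mono, ← Finset.prod_mul_distrib]

/-- sphere identity -/
lemma gaussK_eq (γ : ℝ) (u v : Sph d) :
    gaussK d γ u v = Real.exp (-(2*γ)) *
      Real.exp ((2*γ) * (inner ℝ (u : EuclideanSpace ℝ (Fin (d+1))) (v : EuclideanSpace ℝ (Fin (d+1))) : ℝ)) := by
  have hn : ‖(u : EuclideanSpace ℝ (Fin (d+1))) - v‖ ^ 2
      = 2 - 2 * (inner ℝ (u : EuclideanSpace ℝ (Fin (d+1))) (v : EuclideanSpace ℝ (Fin (d+1))) : ℝ) := by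
    rw [norm_sub_sq_real]
    have hu : ‖(u : EuclideanSpace ℝ (Fin (d+1)))‖ = 1 := by
      simpa using mem_sphere_zero_iff_norm.mp u.2
    have hv : ‖(v : EuclideanSpace ℝ (Fin (d+1)))‖ = 1 := by
      simpa using mem_sphere_zero_iff_norm.mp v.2
    rw [hu, hv]; ring
  rw [gaussK, hn, ← Real.exp_add]
  ring_nf


/-- the coefficient -/
def coeff (γ : ℝ) (k : ℕ) : ℝ := (2*γ)^k / (k.factorial : ℝ)

lemma coeff_nonneg {γ : ℝ} (hγ : 0 < γ) (k : ℕ) : 0 ≤ coeff γ k := by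
  unfold coeff; positivity

lemma coeff_pos {γ : ℝ} (hγ : 0 < γ) (k : ℕ) : 0 < coeff γ k := by
  unfold coeff; positivity

/-- moment -/
def momf (μ : Measure (Sph d)) (k : ℕ) (f : Fin k → Fin (d+1)) : ℝ :=
  ∫ u, mono d k f u ∂μ

lemma abs_momf_le (μ : Measure (Sph d)) [IsFiniteMeasure μ] (k : ℕ) (f : Fin k → Fin (d+1)) :
    |momf μ k f| ≤ (μ Set.univ).toReal := by
  have := norm_integral_le_of_norm_le_const (μ := μ) (f := mono d k f) (C := 1)
    (Filter.Eventually.of_forall fun u => by simpa using abs_mono_le_one k f u)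
  simpa [momf, measureReal_def] using this

/-- per-degree sum of products of moments -/
def Sk (μ ν : Measure (Sph d)) (k : ℕ) : ℝ :=
  ∑ f : Fin k → Fin (d+1), momf μ k f * momf ν k f

lemma abs_Sk_le (μ ν : Measure (Sph d)) [IsFiniteMeasure μ] [IsFiniteMeasure ν] (k : ℕ) :
    |Sk μ ν k| ≤ ((d+1:ℝ))^k * ((μ Set.univ).toReal * (ν Set.univ).toReal) := by
  have h1 : |Sk μ ν k| ≤ ∑ f : Fin k → Fin (d+1), |momf μ k f * momf ν k f| :=
    Finset.abs_sum_le_sum_abs _ _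
  have h2 : ∀ f : Fin k → Fin (d+1), |momf μ k f * momf ν k f|
      ≤ (μ Set.univ).toReal * (ν Set.univ).toReal := by
    intro f
    rw [abs_mul]
    exact mul_le_mul (abs_momf_le μ k f) (abs_momf_le ν k f) (abs_nonneg _) ENNReal.toReal_nonneg
  calc |Sk μ ν k| ≤ ∑ _f : Fin k → Fin (d+1), (μ Set.univ).toReal * (ν Set.univ).toReal :=
        h1.trans (Finset.sum_le_sum fun f _ => h2 f)
    _ = ((d+1:ℝ))^k * ((μ Set.univ).toReal * (ν Set.univ).toReal) := by
        rw [Finset.sum_const, Finset.card_univ, Fintype.card_fun]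
        simp [nsmul_eq_mul]

lemma summable_coeff_mul {γ : ℝ} (hγ : 0 < γ) (C : ℝ) :
    Summable (fun k => coeff γ k * (((d+1:ℝ))^k * C)) := by
  have h : Summable (fun k : ℕ => ((2*γ*(d+1))^k / (k.factorial : ℝ)) * C) :=
    (Real.summable_pow_div_factorial (2*γ*(d+1))).mul_right C
  refine h.congr fun k => ?_
  unfold coeff
  rw [mul_pow]
  ring

lemma summable_coeff_Sk {γ : ℝ} (hγ : 0 < γ) (μ ν : Measure (Sph d))
    [IsFiniteMeasure μ] [IsFiniteMeasure ν] :
    Summable (fun k => coeff γ k * Sk μ ν k) := by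
  refine Summable.of_norm_bounded
    (summable_coeff_mul (d := d) hγ ((μ Set.univ).toReal * (ν Set.univ).toReal)) fun k => ?_
  rw [Real.norm_eq_abs, abs_mul, abs_of_nonneg (coeff_nonneg hγ k)]
  exact mul_le_mul_of_nonneg_left (abs_Sk_le μ ν k) (coeff_nonneg hγ k)


/-- The main expansion. -/
lemma mutualEnergy_eq {γ : ℝ} (hγ : 0 < γ) (μ ν : Measure (Sph d))
    [IsFiniteMeasure μ] [IsFiniteMeasure ν] :
    mutualEnergy (gaussK d γ) μ ν
      = Real.exp (-(2*γ)) * ∑' k : ℕ, coeff γ k * Sk μ ν k := by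
  set P := μ.prod ν with hP
  have hKcont : Continuous (fun z : Sph d × Sph d => gaussK d γ z.1 z.2) := by
    unfold gaussK; fun_prop
  have hKint : Integrable (Function.uncurry (gaussK d γ)) P :=
    integrable_of_continuous P hKcont
  have h0 : mutualEnergy (gaussK d γ) μ ν = ∫ z, gaussK d γ z.1 z.2 ∂P :=
    integral_integral hKint
  set g : ℕ → Sph d × Sph d → ℝ := fun k z =>
    coeff γ k * ∑ f : Fin k → Fin (d+1), mono d k f z.1 * mono d k f z.2 with hg
  have hgcont : ∀ k, Continuous (g k) := fun k =>
    continuous_const.mul (continuous_finset_sum _ fun f _ =>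
      ((continuous_mono k f).comp continuous_fst).mul
        ((continuous_mono k f).comp continuous_snd))
  have habs : ∀ k z, |g k z| ≤ coeff γ k * ((d+1:ℝ))^k := by
    intro k z
    rw [hg]
    simp only
    rw [abs_mul, abs_of_nonneg (coeff_nonneg hγ k)]
    refine mul_le_mul_of_nonneg_left ?_ (coeff_nonneg hγ k)
    calc |∑ f : Fin k → Fin (d+1), mono d k f z.1 * mono d k f z.2|
        ≤ ∑ f : Fin k → Fin (d+1), |mono d k f z.1 * mono d k f z.2| :=
          Finset.abs_sum_le_sum_abs _ _
      _ ≤ ∑ _f : Fin k → Fin (d+1), 1 := by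
          refine Finset.sum_le_sum fun f _ => ?_
          rw [abs_mul]
          exact mul_le_one₀ (abs_mono_le_one k f z.1) (abs_nonneg _) (abs_mono_le_one k f z.2)
      _ = ((d+1:ℝ))^k := by
          rw [Finset.sum_const, Finset.card_univ, Fintype.card_fun]
          simp
  -- pointwise expansion
  have hpt : ∀ z : Sph d × Sph d, gaussK d γ z.1 z.2 = Real.exp (-(2*γ)) * ∑' k, g k z := by
    intro z
    rw [gaussK_eq]
    congr 1
    rw [Real.exp_eq_exp_ℝ, NormedSpace.exp_eq_tsum_div]
    refine tsum_congr fun k => ?_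
    rw [hg]
    simp only
    rw [← inner_pow_eq z.1 z.2 k, mul_pow, coeff]
    ring
  -- summability of lintegrals
  have hbsum : Summable (fun k => coeff γ k * ((d+1:ℝ))^k) := by
    refine (summable_coeff_mul (d := d) hγ 1).congr fun k => by ring
  have hbnn : ∀ k, 0 ≤ coeff γ k * ((d+1:ℝ))^k := fun k => by
    have := coeff_nonneg hγ k; positivity
  have hlint : ∑' k, ∫⁻ z, ‖g k z‖₊ ∂P ≠ ⊤ := by
    have hle : ∀ k, ∫⁻ z, ‖g k z‖₊ ∂P ≤ ENNReal.ofReal (coeff γ k * ((d+1:ℝ))^k) * P Set.univ := by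
      intro k
      calc ∫⁻ z, (‖g k z‖₊ : ENNReal) ∂P
          ≤ ∫⁻ _z, ENNReal.ofReal (coeff γ k * ((d+1:ℝ))^k) ∂P := by
            refine lintegral_mono fun z => ?_
            rw [← enorm_eq_nnnorm, ← ofReal_norm]
            exact ENNReal.ofReal_le_ofReal (by simpa using habs k z)
        _ = ENNReal.ofReal (coeff γ k * ((d+1:ℝ))^k) * P Set.univ := lintegral_const _
    apply ne_of_lt
    calc ∑' k, ∫⁻ z, (‖g k z‖₊ : ENNReal) ∂P
        ≤ ∑' k, ENNReal.ofReal (coeff γ k * ((d+1:ℝ))^k) * P Set.univ :=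
          ENNReal.tsum_le_tsum hle
      _ = (∑' k, ENNReal.ofReal (coeff γ k * ((d+1:ℝ))^k)) * P Set.univ :=
          ENNReal.tsum_mul_right
      _ = ENNReal.ofReal (∑' k, coeff γ k * ((d+1:ℝ))^k) * P Set.univ := by
          rw [ENNReal.ofReal_tsum_of_nonneg hbnn hbsum]
      _ < ⊤ := ENNReal.mul_lt_top ENNReal.ofReal_lt_top (measure_lt_top P _)
  -- the per-degree integral
  have hterm : ∀ k, ∫ z, g k z ∂P = coeff γ k * Sk μ ν k := by
    intro k
    rw [hg]
    simp only
    rw [integral_const_mul]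
    congr 1
    rw [integral_finset_sum (μ := P)
      (f := fun (f : Fin k → Fin (d+1)) (z : Sph d × Sph d) => mono d k f z.1 * mono d k f z.2)
      _ (fun f _ => integrable_of_continuous P
      (((continuous_mono k f).comp continuous_fst).mul
        ((continuous_mono k f).comp continuous_snd)))]
    refine Finset.sum_congr rfl fun f _ => ?_
    exact integral_prod_mul (L := ℝ) (mono d k f) (mono d k f)
  calc mutualEnergy (gaussK d γ) μ ν = ∫ z, gaussK d γ z.1 z.2 ∂P := h0
    _ = ∫ z, Real.exp (-(2*γ)) * ∑' k, g k z ∂P :=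
        integral_congr_ae (Filter.Eventually.of_forall hpt)
    _ = Real.exp (-(2*γ)) * ∫ z, ∑' k, g k z ∂P := integral_const_mul _ _
    _ = Real.exp (-(2*γ)) * ∑' k, ∫ z, g k z ∂P := by
        rw [integral_tsum (fun k => (hgcont k).aestronglyMeasurable) hlint]
    _ = Real.exp (-(2*γ)) * ∑' k, coeff γ k * Sk μ ν k := by
        rw [tsum_congr hterm]

/-- monomials as continuous maps -/
def monoCM (d k : ℕ) (f : Fin k → Fin (d+1)) : C(Sph d, ℝ) :=
  ⟨mono d k f, continuous_mono k f⟩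

/-- the set of monomial functions -/
def monoSet (d : ℕ) : Set C(Sph d, ℝ) := {g | ∃ k f, g = monoCM d k f}

lemma one_mem_monoSet : (1 : C(Sph d, ℝ)) ∈ monoSet d := by
  refine ⟨0, Fin.elim0, ?_⟩
  ext u
  simp [monoCM, mono]

lemma mul_mem_monoSet {g h : C(Sph d, ℝ)} (hg : g ∈ monoSet d) (hh : h ∈ monoSet d) :
    g * h ∈ monoSet d := by
  obtain ⟨k, f, rfl⟩ := hg
  obtain ⟨l, f', rfl⟩ := hh
  refine ⟨k + l, Fin.append f f', ?_⟩
  ext u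
  simp only [ContinuousMap.mul_apply, monoCM, ContinuousMap.coe_mk, mono]
  rw [Fin.prod_univ_add]
  congr 1
  · exact Finset.prod_congr rfl fun j _ => by rw [Fin.append_left]
  · exact Finset.prod_congr rfl fun j _ => by rw [Fin.append_right]

/-- monomials form a submonoid -/
def monoSubmonoid (d : ℕ) : Submonoid C(Sph d, ℝ) where
  carrier := monoSet d
  one_mem' := one_mem_monoSet
  mul_mem' := mul_mem_monoSet

/-- the subalgebra generated by monomials separates points -/
lemma separates : (Algebra.adjoin ℝ (monoSet d)).SeparatesPoints := by
  intro x y hxy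
  have hv : (x : EuclideanSpace ℝ (Fin (d+1))) ≠ y := fun h => hxy (Subtype.ext h)
  obtain ⟨i, hi⟩ := Function.ne_iff.mp (fun h => hv (WithLp.ofLp_injective 2 h))
  refine ⟨monoCM d 1 (fun _ => i), ?_, ?_⟩
  · exact ⟨monoCM d 1 (fun _ => i), Algebra.subset_adjoin ⟨1, fun _ => i, rfl⟩, rfl⟩
  · simpa [monoCM, mono] using hi

/-- integral against a finite measure is Lipschitz on C(X, ℝ) -/
lemma continuous_integral_CM (μ : Measure (Sph d)) [IsFiniteMeasure μ] :
    Continuous (fun g : C(Sph d, ℝ) => ∫ x, g x ∂μ) := by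
  refine (LipschitzWith.of_dist_le_mul (K := (μ Set.univ).toReal.toNNReal) ?_).continuous
  intro g h
  rw [Real.dist_eq, ← integral_sub (integrable_of_continuous μ g.continuous)
    (integrable_of_continuous μ h.continuous)]
  have hb : ∀ x, ‖g x - h x‖ ≤ dist g h := fun x => by
    rw [Real.norm_eq_abs, ← Real.dist_eq]
    exact ContinuousMap.dist_apply_le_dist x
  have := norm_integral_le_of_norm_le_const (μ := μ) (Filter.Eventually.of_forall hb)
  rw [Real.norm_eq_abs] at this
  calc |∫ x, (g x - h x) ∂μ| ≤ dist g h * (μ Set.univ).toReal := this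
    _ = ((μ Set.univ).toReal.toNNReal : ℝ) * dist g h := by
        rw [Real.coe_toNNReal _ ENNReal.toReal_nonneg, mul_comm]

/-- if all monomial moments agree, then all integrals of continuous functions agree -/
lemma integral_eq_of_moments (μ ν : Measure (Sph d)) [IsFiniteMeasure μ] [IsFiniteMeasure ν]
    (hmom : ∀ k (f : Fin k → Fin (d+1)), momf μ k f = momf ν k f) (g : C(Sph d, ℝ)) :
    ∫ x, g x ∂μ = ∫ x, g x ∂ν := by
  set T : Set C(Sph d, ℝ) := {h | ∫ x, h x ∂μ = ∫ x, h x ∂ν} with hT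
  have hTclosed : IsClosed T := by
    have : T = (fun h : C(Sph d, ℝ) => (∫ x, h x ∂μ) - ∫ x, h x ∂ν) ⁻¹' {0} := by
      ext h; simp [hT, sub_eq_zero]
    rw [this]
    exact IsClosed.preimage ((continuous_integral_CM μ).sub (continuous_integral_CM ν))
      isClosed_singleton
  -- the span of monomials is contained in T
  have hspan : (Submodule.span ℝ (monoSet d) : Set C(Sph d, ℝ)) ⊆ T := by
    intro h hh
    induction hh using Submodule.span_induction with
    | mem x hx =>
      obtain ⟨k, f, rfl⟩ := hx
      exact hmom k f
    | zero => simp [hT]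
    | add x y hx hy ihx ihy =>
      have hx' := integrable_of_continuous μ x.continuous
      have hy' := integrable_of_continuous μ y.continuous
      have hx'' := integrable_of_continuous ν x.continuous
      have hy'' := integrable_of_continuous ν y.continuous
      simp only [hT, Set.mem_setOf_eq, ContinuousMap.add_apply] at *
      rw [integral_add hx' hy', integral_add hx'' hy'', ihx, ihy]
    | smul a x hx ihx =>
      simp only [hT, Set.mem_setOf_eq, ContinuousMap.smul_apply] at *
      rw [integral_smul, integral_smul, ihx]
  -- adjoin = span since the monomials form a submonoid
  have hadj : ((Algebra.adjoin ℝ (monoSet d) : Subalgebra ℝ C(Sph d, ℝ)) : Set C(Sph d, ℝ)) ⊆ T := by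
    intro h hh
    apply hspan
    have := Algebra.adjoin_eq_span (R := ℝ) (s := monoSet d)
    have h2 : Submonoid.closure (monoSet d) = monoSubmonoid d :=
      Submonoid.closure_eq (monoSubmonoid d)
    have h3 : h ∈ Subalgebra.toSubmodule (Algebra.adjoin ℝ (monoSet d)) := hh
    rw [this, h2] at h3
    exact h3
  -- Stone-Weierstrass
  have hsw := ContinuousMap.subalgebra_topologicalClosure_eq_top_of_separatesPoints
    (Algebra.adjoin ℝ (monoSet d)) separates
  have hg : g ∈ (Algebra.adjoin ℝ (monoSet d)).topologicalClosure := by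
    rw [hsw]; trivial
  have : g ∈ closure ((Algebra.adjoin ℝ (monoSet d) : Subalgebra ℝ C(Sph d, ℝ)) : Set C(Sph d, ℝ)) := hg
  exact closure_minimal hadj hTclosed this

/-- equal integrals for continuous functions gives equal measures -/
lemma measure_eq_of_integral_eq (μ ν : Measure (Sph d)) [IsFiniteMeasure μ] [IsFiniteMeasure ν]
    (h : ∀ g : C(Sph d, ℝ), ∫ x, g x ∂μ = ∫ x, g x ∂ν) : μ = ν := by
  apply ext_of_forall_lintegral_eq_of_IsFiniteMeasure
  intro f
  have hcont : Continuous (fun x : Sph d => (f x : ℝ)) := by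
    exact NNReal.continuous_coe.comp f.continuous
  have h1 : ∫⁻ x, f x ∂μ = ENNReal.ofReal (∫ x, (f x : ℝ) ∂μ) :=
    lintegral_coe_eq_integral _ (integrable_of_continuous μ hcont)
  have h2 : ∫⁻ x, f x ∂ν = ENNReal.ofReal (∫ x, (f x : ℝ) ∂ν) :=
    lintegral_coe_eq_integral _ (integrable_of_continuous ν hcont)
  rw [h1, h2]
  congr 1
  exact h ⟨fun x => (f x : ℝ), hcont⟩


/-- sum-of-squares identity per degree -/
lemma sq_sum_identity {n : ℕ} (g h : (Fin n → Fin (d+1)) → ℝ) :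
    (∑ f, g f * g f) + (∑ f, h f * h f) - 2 * (∑ f, g f * h f)
      = ∑ f, (g f - h f)^2 := by
  rw [Finset.mul_sum, ← Finset.sum_add_distrib, ← Finset.sum_sub_distrib]
  exact Finset.sum_congr rfl fun f _ => by ring

end GaussAux

open GaussAux

/-- For every `γ > 0` and every finite signed Borel measure `s` on the unit
sphere `S^d` (`d ≥ 1`), the Gaussian energy satisfies `I_{G_γ}[s] ≥ 0`, and `I_{G_γ}[s] = 0`
only if `s = 0`: the Gaussian kernel is strictly positive definite on `S^d × S^d`. -/
theorem gaussian_strictly_positive_definite (d : ℕ) (hd : 1 ≤ d) (γ : ℝ) (hγ : 0 < γ)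
    (s : SignedMeasure (Sph d)) :
    0 ≤ signedEnergy (gaussK d γ) s ∧ (signedEnergy (gaussK d γ) s = 0 → s = 0) := by
  set μ := s.toJordanDecomposition.posPart with hμ
  set ν := s.toJordanDecomposition.negPart with hν
  set D : ℕ → ℝ := fun k => coeff γ k * ∑ f : Fin k → Fin (d+1), (momf μ k f - momf ν k f)^2
    with hD
  have h1 := summable_coeff_Sk (d := d) hγ μ μ
  have h2 := summable_coeff_Sk (d := d) hγ ν ν
  have h3 := summable_coeff_Sk (d := d) hγ μ ν
  have hterm : ∀ k, coeff γ k * Sk μ μ k + coeff γ k * Sk ν ν k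
      - 2 * (coeff γ k * Sk μ ν k) = D k := by
    intro k
    rw [hD]
    simp only
    rw [Sk, Sk, Sk, ← sq_sum_identity (fun f => momf μ k f) (fun f => momf ν k f)]
    ring
  have hD_summable : Summable D :=
    (((h1.add h2).sub (h3.mul_left 2)).congr fun k => by
      simpa using hterm k)
  have hexp : signedEnergy (gaussK d γ) s = Real.exp (-(2*γ)) * ∑' k, D k := by
    rw [signedEnergy, ← hμ, ← hν, mutualEnergy_eq hγ μ μ, mutualEnergy_eq hγ ν ν,
      mutualEnergy_eq hγ μ ν]
    have hc : ∀ (a b c e : ℝ), e * a + e * b - 2 * (e * c) = e * (a + b - 2 * c) := by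
      intros; ring
    rw [hc]
    congr 1
    rw [← tsum_mul_left, ← Summable.tsum_add h1 h2, ← Summable.tsum_sub (h1.add h2) (h3.mul_left 2)]
    exact tsum_congr fun k => by simpa using hterm k
  have hD_nonneg : ∀ k, 0 ≤ D k := fun k =>
    mul_nonneg (coeff_nonneg hγ k) (Finset.sum_nonneg fun f _ => sq_nonneg _)
  constructor
  · rw [hexp]
    exact mul_nonneg (Real.exp_pos _).le (tsum_nonneg hD_nonneg)
  · intro h0
    rw [hexp] at h0
    have htsum : ∑' k, D k = 0 :=
      (mul_eq_zero.mp h0).resolve_left (Real.exp_ne_zero _)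
    have hDk : ∀ k, D k = 0 := fun k =>
      le_antisymm (htsum ▸ Summable.le_tsum hD_summable k fun j _ => hD_nonneg j) (hD_nonneg k)
    have hmom : ∀ k (f : Fin k → Fin (d+1)), momf μ k f = momf ν k f := by
      intro k f
      have hk := hDk k
      rw [hD] at hk
      simp only at hk
      have hsum0 : ∑ f : Fin k → Fin (d+1), (momf μ k f - momf ν k f)^2 = 0 := by
        rcases mul_eq_zero.mp hk with h | h
        · exact absurd h (coeff_pos hγ k).ne'
        · exact h
      have := (Finset.sum_eq_zero_iff_of_nonneg (fun f _ => sq_nonneg _)).mp hsum0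
        f (Finset.mem_univ f)
      have := sq_eq_zero_iff.mp this
      linarith [this]
    have hμν : μ = ν := measure_eq_of_integral_eq μ ν (integral_eq_of_moments μ ν hmom)
    rw [← s.toSignedMeasure_toJordanDecomposition, JordanDecomposition.toSignedMeasure,
      sub_eq_zero]
    congr 1

end
end

section
/- For every γ > 0 and every Borel probability measure μ on the unit sphere S^d (d ≥ 1), the uniform probability measure σ_d satisfies I_{G_γ}[σ_d] ≤ I_{G_γ}[μ]; that is, σ_d minimizes the Gaussian pairwise potential energy over all Borel probability measures on S^d. -/
open MeasureTheory

noncomputable section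

/-- The uniform probability measure `σ_d` on `S^d`: the `d`-dimensional Hausdorff measure
restricted to the sphere, normalized to total mass one. -/
def sigmaSph (d : ℕ) : Measure (Sph d) :=
  ((μH[(d : ℝ)] : Measure (Sph d)) Set.univ)⁻¹ • (μH[(d : ℝ)] : Measure (Sph d))

/-- Energy `I_K[μ] = ∬ K(u,v) dμ(u) dμ(v)` of a Borel measure on `S^d`. -/
def energy {d : ℕ} (K : Sph d → Sph d → ℝ) (μ : Measure (Sph d)) : ℝ :=
  ∫ u, ∫ v, K u v ∂μ ∂μ

set_option maxHeartbeats 1000000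

open Metric Set

namespace SigmaMin

abbrev Vd (d : ℕ) := EuclideanSpace ℝ (Fin (d+1))
abbrev Ed (d : ℕ) := EuclideanSpace ℝ (Fin d)

/-- Reinterpret a plain tuple as a point of Euclidean space (with the `ℓ²` norm). -/
def toE {n : ℕ} (f : Fin n → ℝ) : EuclideanSpace ℝ (Fin n) := WithLp.toLp 2 f

lemma norm_sq_eq {n : ℕ} (x : EuclideanSpace ℝ (Fin n)) : ‖x‖^2 = ∑ i, x i ^ 2 := by
  rw [EuclideanSpace.norm_eq, Real.sq_sqrt (by positivity)]
  simp [sq_abs]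

lemma dist_sq_eq {n : ℕ} (x y : EuclideanSpace ℝ (Fin n)) :
    dist x y ^ 2 = ∑ i, (x i - y i) ^ 2 := by
  rw [EuclideanSpace.dist_eq, Real.sq_sqrt (by positivity)]
  simp [Real.dist_eq, sq_abs]

lemma hmeas_compact_ne_top (d : ℕ) {s : Set (Ed d)} (hs : IsCompact s) :
    μH[(d:ℝ)] s ≠ ⊤ := by
  haveI : (μH[(d:ℝ)] : Measure (Ed d)).IsAddHaarMeasure := by
    have e : (d:ℝ) = ((Module.finrank ℝ (Ed d) : ℕ) : ℝ) := by simp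
    rw [e]; exact isAddHaarMeasure_hausdorffMeasure
  exact hs.measure_lt_top.ne

lemma sphere_hmeas_ne_top (d : ℕ) : μH[(d:ℝ)] (sphere (0 : Vd d) 1) ≠ ⊤ := by
  have hr0 : (0:ℝ) ≤ 1 - 1/(d+1) := by
    have h1 : (1:ℝ)/(d+1) ≤ 1 := by
      rw [div_le_one (by positivity)]
      have : (0:ℝ) ≤ d := Nat.cast_nonneg d
      linarith
    linarith
  set r : ℝ := Real.sqrt (1 - 1/(d+1)) with hr_def
  have hr1 : r ≤ 1 := by
    rw [hr_def, show (1:ℝ) = Real.sqrt 1 by simp]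
    apply Real.sqrt_le_sqrt
    have : (0:ℝ) < 1/(d+1) := by positivity
    rw [Real.sqrt_one]
    linarith
  set B : Set (Ed d) := closedBall 0 r with hB_def
  set h : Ed d → ℝ := fun y => Real.sqrt (1 - ‖y‖^2) with hh_def
  set g : Fin (d+1) → ℝ → Ed d → Vd d :=
    fun i ε y => (WithLp.toLp 2 (Fin.insertNth i (ε * h y) y) : Vd d) with hg_def
  -- basic facts on B
  have hBnorm : ∀ y ∈ B, ‖y‖^2 ≤ 1 - 1/((d:ℝ)+1) := by
    intro y hy
    rw [hB_def, mem_closedBall_zero_iff] at hy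
    have h2 := pow_le_pow_left₀ (norm_nonneg y) hy 2
    rw [hr_def] at h2
    rwa [Real.sq_sqrt hr0] at h2
  have hq0 : (0:ℝ) < 1/(d+1) := by positivity
  have hlow : ∀ y ∈ B, Real.sqrt (1/(d+1)) ≤ h y := by
    intro y hy
    apply Real.sqrt_le_sqrt
    have := hBnorm y hy; linarith
  have hqpos : 0 < Real.sqrt (1/(d+1)) := Real.sqrt_pos.mpr hq0
  have hspos : 0 < Real.sqrt ((d:ℝ)+1) := Real.sqrt_pos.mpr (by positivity)
  have hsq : Real.sqrt ((d:ℝ)+1) * Real.sqrt (1/(d+1)) = 1 := by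
    rw [← Real.sqrt_mul (by positivity)]
    rw [mul_one_div, div_self (by positivity), Real.sqrt_one]
  -- Lipschitz bound for h on B
  have hdiff : ∀ y ∈ B, ∀ z ∈ B, |h y - h z| ≤ Real.sqrt ((d:ℝ)+1) * dist y z := by
    intro y hy z hz
    have hy2 : h y ^ 2 = 1 - ‖y‖^2 := Real.sq_sqrt (by have := hBnorm y hy; linarith)
    have hz2 : h z ^ 2 = 1 - ‖z‖^2 := Real.sq_sqrt (by have := hBnorm z hz; linarith)
    have hyn : 0 ≤ h y := Real.sqrt_nonneg _
    have hzn : 0 ≤ h z := Real.sqrt_nonneg _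
    have habs : |‖z‖ - ‖y‖| ≤ dist y z := by
      rw [dist_comm, dist_eq_norm]
      exact abs_norm_sub_norm_le z y
    have hyr : ‖y‖ ≤ 1 := by nlinarith [hBnorm y hy, norm_nonneg y]
    have hzr : ‖z‖ ≤ 1 := by nlinarith [hBnorm z hz, norm_nonneg z]
    have key : |h y - h z| * (h y + h z) ≤ 2 * dist y z := by
      have e1 : |h y - h z| * (h y + h z) = |(h y - h z) * (h y + h z)| := by
        rw [abs_mul, abs_of_nonneg (show (0:ℝ) ≤ h y + h z by linarith)]
      have e2 : (h y - h z) * (h y + h z) = ‖z‖^2 - ‖y‖^2 := by nlinarith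
      rw [e1, e2]
      have : |‖z‖^2 - ‖y‖^2| = |‖z‖ - ‖y‖| * (‖z‖ + ‖y‖) := by
        rw [← abs_of_nonneg (show 0 ≤ ‖z‖ + ‖y‖ by positivity), ← abs_mul]
        ring_nf
      rw [this]
      have h2 : ‖z‖ + ‖y‖ ≤ 2 := by linarith
      nlinarith [abs_nonneg (‖z‖ - ‖y‖), dist_nonneg (x := y) (y := z)]
    have hsum : 2 * Real.sqrt (1/(d+1)) ≤ h y + h z := by
      have := hlow y hy; have := hlow z hz; linarith
    have k1 : Real.sqrt ((d:ℝ)+1) * (|h y - h z| * (h y + h z))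
        ≤ Real.sqrt ((d:ℝ)+1) * (2 * dist y z) := mul_le_mul_of_nonneg_left key hspos.le
    have k2 : |h y - h z| * (2 * Real.sqrt (1/(d+1))) ≤ |h y - h z| * (h y + h z) :=
      mul_le_mul_of_nonneg_left hsum (abs_nonneg _)
    have k3 := mul_le_mul_of_nonneg_left k2 hspos.le
    have k4 : |h y - h z| * (Real.sqrt ((d:ℝ)+1) * Real.sqrt (1/(d+1))) = |h y - h z| := by
      rw [hsq, mul_one]
    nlinarith [k1, k3, k4]
  -- Lipschitz bound for g i ε on B
  have hgdist : ∀ (i : Fin (d+1)) (ε : ℝ), |ε| ≤ 1 → ∀ y ∈ B, ∀ z ∈ B,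
      dist (g i ε y) (g i ε z) ≤ ((d:ℝ)+2) * dist y z := by
    intro i ε hε y hy z hz
    have hd2 : (ε * h y - ε * h z)^2 ≤ ((d:ℝ)+1) * dist y z ^ 2 := by
      have e : (ε * h y - ε * h z)^2 = ε^2 * (h y - h z)^2 := by ring
      rw [e]
      have h1 : (h y - h z)^2 ≤ ((d:ℝ)+1) * dist y z^2 := by
        have hle := hdiff y hy z hz
        have h2 : (h y - h z)^2 ≤ (Real.sqrt ((d:ℝ)+1) * dist y z)^2 := by
          rw [← sq_abs]
          exact pow_le_pow_left₀ (abs_nonneg _) hle 2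
        have h3 : (Real.sqrt ((d:ℝ)+1))^2 = (d:ℝ)+1 := Real.sq_sqrt (by positivity)
        nlinarith
      nlinarith [sq_nonneg ε, sq_nonneg (h y - h z), abs_nonneg ε,
        sq_abs ε ▸ pow_le_pow_left₀ (abs_nonneg ε) hε 2]
    have key : dist (g i ε y) (g i ε z) ^ 2 ≤ (((d:ℝ)+2) * dist y z)^2 := by
      rw [hg_def]
      rw [dist_sq_eq]
      rw [Fin.sum_univ_succAbove
        (fun j => ((WithLp.toLp 2 (Fin.insertNth i (ε * h y) y) : Vd d) j
          - (WithLp.toLp 2 (Fin.insertNth i (ε * h z) z) : Vd d) j)^2) i]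
      simp only [WithLp.ofLp_toLp, Fin.insertNth_apply_same, Fin.insertNth_apply_succAbove]
      rw [show ∑ k, (y k - z k)^2 = dist y z ^ 2 from (dist_sq_eq y z).symm]
      nlinarith [dist_nonneg (x := y) (y := z), sq_nonneg (dist y z)]
    calc dist (g i ε y) (g i ε z) = Real.sqrt (dist (g i ε y) (g i ε z) ^ 2) :=
          (Real.sqrt_sq dist_nonneg).symm
    _ ≤ Real.sqrt ((((d:ℝ)+2) * dist y z)^2) := Real.sqrt_le_sqrt key
    _ = ((d:ℝ)+2) * dist y z := Real.sqrt_sq (by positivity)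
  -- covering
  have cover : sphere (0 : Vd d) 1 ⊆
      ⋃ p : Fin (d+1) × Bool, g p.1 (if p.2 then 1 else -1) '' B := by
    intro u hu
    have hnu : ‖u‖ = 1 := mem_sphere_zero_iff_norm.mp hu
    have hsum : ∑ j, u j ^ 2 = 1 := by
      have := norm_sq_eq u
      rw [hnu] at this; linarith [this]
    obtain ⟨i, hi⟩ : ∃ i, 1/((d:ℝ)+1) ≤ u i ^ 2 := by
      by_contra hcon
      push_neg at hcon
      have hlt : ∑ j, u j ^ 2 < ∑ _j : Fin (d+1), 1/((d:ℝ)+1) :=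
        Finset.sum_lt_sum_of_nonempty Finset.univ_nonempty (fun j _ => hcon j)
      rw [hsum, Finset.sum_const, Finset.card_univ, Fintype.card_fin] at hlt
      rw [nsmul_eq_mul] at hlt
      have : ((d:ℝ)+1) * (1/((d:ℝ)+1)) = 1 := by field_simp
      push_cast at hlt
      rw [this] at hlt
      exact lt_irrefl _ hlt
    set y : Ed d := WithLp.toLp 2 (fun k => u (i.succAbove k) : Fin d → ℝ) with hy_def
    have hy2 : ‖y‖^2 = 1 - u i ^ 2 := by
      rw [norm_sq_eq]
      have := Fin.sum_univ_succAbove (fun j => u j ^ 2) i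
      rw [hsum] at this
      have e : ∑ k, y k ^ 2 = ∑ k, u (i.succAbove k) ^ 2 := rfl
      rw [e]; linarith
    have hyB : y ∈ B := by
      rw [hB_def, mem_closedBall_zero_iff]
      have h1 : ‖y‖^2 ≤ 1 - 1/((d:ℝ)+1) := by rw [hy2]; linarith
      have := Real.sqrt_le_sqrt h1
      rwa [Real.sqrt_sq (norm_nonneg y)] at this
    have hhy : h y = |u i| := by
      rw [hh_def]
      simp only [hy2]
      rw [show (1 : ℝ) - (1 - u i ^ 2) = u i ^ 2 by ring, Real.sqrt_sq_eq_abs]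
    refine mem_iUnion.mpr ⟨⟨i, decide (0 ≤ u i)⟩, ⟨y, hyB, ?_⟩⟩
    have hεh : (if (decide (0 ≤ u i) : Bool) then (1:ℝ) else -1) * h y = u i := by
      rw [hhy]
      by_cases hc : 0 ≤ u i
      · simp [hc, abs_of_nonneg hc]
      · simp [hc, abs_of_neg (lt_of_not_ge hc)]
    show g i _ y = u
    rw [hg_def]
    simp only [hεh]
    exact (congrArg (WithLp.toLp 2) (Fin.insertNth_self_removeNth i (WithLp.ofLp u))).trans (WithLp.toLp_ofLp (p := 2) u)
  -- conclude
  refine ne_of_lt (lt_of_le_of_lt (measure_mono cover) ?_)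
  refine lt_of_le_of_lt (measure_iUnion_le _) ?_
  rw [tsum_fintype]
  refine ENNReal.sum_lt_top.mpr (fun p _ => ?_)
  have hlip : LipschitzOnWith (⟨(d:ℝ)+2, by positivity⟩ : NNReal)
      (g p.1 (if p.2 then 1 else -1)) B := by
    apply LipschitzOnWith.of_dist_le_mul
    intro y hy z hz
    have : |(if p.2 then (1:ℝ) else -1)| ≤ 1 := by
      by_cases hc : p.2 <;> simp [hc]
    exact hgdist p.1 _ this y hy z hz
  refine lt_of_le_of_lt (hlip.hausdorffMeasure_image_le (Nat.cast_nonneg d)) ?_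
  exact ENNReal.mul_lt_top
    (ENNReal.rpow_lt_top_of_nonneg (Nat.cast_nonneg d) ENNReal.coe_ne_top)
    (lt_of_le_of_ne le_top (hmeas_compact_ne_top d (isCompact_closedBall 0 r)))


lemma hmeas_univ_eq (d : ℕ) :
    μH[(d:ℝ)] (univ : Set (Sph d)) = μH[(d:ℝ)] (sphere (0 : Vd d) 1) := by
  have h := (isometry_subtype_coe : Isometry ((↑) : Sph d → Vd d)).hausdorffMeasure_image
      (Or.inl (Nat.cast_nonneg d)) univ
  rw [image_univ, Subtype.range_coe] at h
  exact h.symm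

lemma hmeas_open_ne_zero (d : ℕ) {s : Set (Ed d)} (hs : IsOpen s)
    (hne : s.Nonempty) : μH[(d:ℝ)] s ≠ 0 := by
  haveI : (μH[(d:ℝ)] : Measure (Ed d)).IsAddHaarMeasure := by
    have e : (d:ℝ) = ((Module.finrank ℝ (Ed d) : ℕ) : ℝ) := by simp
    rw [e]; exact isAddHaarMeasure_hausdorffMeasure
  exact (hs.measure_pos _ hne).ne'

lemma sphere_hmeas_ne_zero (d : ℕ) (hd : 1 ≤ d) :
    μH[(d:ℝ)] (sphere (0 : Vd d) 1) ≠ 0 := by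
  haveI : Nonempty (Fin d) := ⟨⟨0, hd⟩⟩
  set p : Vd d → Ed d := fun u => WithLp.toLp 2 (fun k => u ((0:Fin (d+1)).succAbove k)) with hp_def
  have hlip : LipschitzWith 1 p := by
    apply LipschitzWith.of_dist_le_mul
    intro u v
    rw [NNReal.coe_one, one_mul]
    have key : dist (p u) (p v)^2 ≤ dist u v^2 := by
      rw [dist_sq_eq, dist_sq_eq]
      rw [Fin.sum_univ_succAbove (fun j => (u j - v j)^2) 0]
      have e : ∑ k, ((p u) k - (p v) k)^2
          = ∑ k, (u ((0:Fin (d+1)).succAbove k) - v ((0:Fin (d+1)).succAbove k))^2 := rfl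
      rw [e]
      nlinarith [sq_nonneg (u 0 - v 0)]
    calc dist (p u) (p v) = Real.sqrt (dist (p u) (p v)^2) := (Real.sqrt_sq dist_nonneg).symm
    _ ≤ Real.sqrt (dist u v^2) := Real.sqrt_le_sqrt key
    _ = dist u v := Real.sqrt_sq dist_nonneg
  have hsub : closedBall (0 : Ed d) 1 ⊆ p '' (sphere (0:Vd d) 1) := by
    intro y hy
    rw [mem_closedBall_zero_iff] at hy
    have hy2 : ‖y‖^2 ≤ 1 := by nlinarith [norm_nonneg y]
    set a := Real.sqrt (1 - ‖y‖^2) with ha_def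
    refine ⟨toE (Fin.insertNth 0 a y), ?_, ?_⟩
    · rw [mem_sphere_zero_iff_norm]
      have hn : ‖toE (Fin.insertNth 0 a y)‖^2 = 1 := by
        rw [norm_sq_eq (toE (Fin.insertNth 0 a y)),
          Fin.sum_univ_succAbove (fun j => ((toE (Fin.insertNth 0 a y)) j)^2) 0]
        have hsame : (toE (Fin.insertNth 0 a y)) 0 = a := Fin.insertNth_apply_same (α := fun _ => ℝ) 0 a y
        have hsucc : ∀ k, (toE (Fin.insertNth 0 a y)) ((0:Fin (d+1)).succAbove k) = y k :=
          fun k => Fin.insertNth_apply_succAbove (α := fun _ => ℝ) 0 a y k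
        rw [hsame, show (∑ k, ((toE (Fin.insertNth 0 a y)) ((0:Fin (d+1)).succAbove k))^2)
            = ∑ k, (y k)^2 from Finset.sum_congr rfl fun k _ => by rw [hsucc k]]
        have e : ∑ k, (y k)^2 = ‖y‖^2 := (norm_sq_eq y).symm
        rw [e, ha_def, Real.sq_sqrt (by linarith)]
        ring
      have e2 : ‖toE (Fin.insertNth 0 a y)‖
          = Real.sqrt (‖toE (Fin.insertNth 0 a y)‖^2) :=
        (Real.sqrt_sq (norm_nonneg _)).symm
      rw [e2, hn, Real.sqrt_one]
    · exact congrArg (WithLp.toLp 2) (funext fun k => Fin.insertNth_apply_succAbove (α := fun _ => ℝ) 0 a y k)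
  intro h0
  have h1 : μH[(d:ℝ)] (p '' (sphere (0:Vd d) 1)) = 0 := by
    have hb := hlip.hausdorffMeasure_image_le (Nat.cast_nonneg d) (sphere (0:Vd d) 1)
    rw [h0, mul_zero] at hb
    exact le_antisymm hb zero_le
  have h2 : μH[(d:ℝ)] (ball (0:Ed d) 1) = 0 :=
    le_antisymm (le_trans (measure_mono (ball_subset_closedBall.trans hsub)) h1.le) zero_le
  exact hmeas_open_ne_zero d isOpen_ball (nonempty_ball.mpr one_pos) h2

lemma hmeas_univ_ne_zero (d : ℕ) (hd : 1 ≤ d) :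
    μH[(d:ℝ)] (univ : Set (Sph d)) ≠ 0 := by
  rw [hmeas_univ_eq]; exact sphere_hmeas_ne_zero d hd

lemma hmeas_univ_ne_top (d : ℕ) : μH[(d:ℝ)] (univ : Set (Sph d)) ≠ ⊤ := by
  rw [hmeas_univ_eq]; exact sphere_hmeas_ne_top d

lemma sigma_isProbability (d : ℕ) (hd : 1 ≤ d) : IsProbabilityMeasure (sigmaSph d) := ⟨by
  rw [sigmaSph, Measure.smul_apply, smul_eq_mul]
  exact ENNReal.inv_mul_cancel (hmeas_univ_ne_zero d hd) (hmeas_univ_ne_top d)⟩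


/-- The isometry of the sphere induced by a linear isometry of the ambient space. -/
def sphIso (d : ℕ) (T : Vd d ≃ₗᵢ[ℝ] Vd d) : Sph d ≃ᵢ Sph d where
  toFun x := ⟨T x, by
    rw [mem_sphere_zero_iff_norm, T.norm_map]
    exact mem_sphere_zero_iff_norm.mp x.2⟩
  invFun x := ⟨T.symm x, by
    rw [mem_sphere_zero_iff_norm, T.symm.norm_map]
    exact mem_sphere_zero_iff_norm.mp x.2⟩
  left_inv x := Subtype.ext (T.symm_apply_apply x)
  right_inv x := Subtype.ext (T.apply_symm_apply x)
  isometry_toFun := Isometry.of_dist_eq fun x y => by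
    rw [Subtype.dist_eq, Subtype.dist_eq]
    exact T.isometry.dist_eq _ _

lemma sphIso_map_sigma (d : ℕ) (T : Vd d ≃ₗᵢ[ℝ] Vd d) :
    Measure.map (sphIso d T) (sigmaSph d) = sigmaSph d := by
  rw [sigmaSph, Measure.map_smul, IsometryEquiv.map_hausdorffMeasure]

lemma potential_const (d : ℕ) (γ : ℝ) (u u' : Sph d) :
    ∫ w, gaussK d γ u w ∂(sigmaSph d) = ∫ w, gaussK d γ u' w ∂(sigmaSph d) := by
  set T := Submodule.reflection (ℝ ∙ ((u:Vd d) - (u':Vd d)))ᗮ with hT_def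
  have hTu : T (u:Vd d) = (u':Vd d) := Submodule.reflection_sub (by
    rw [mem_sphere_zero_iff_norm.mp u.2, mem_sphere_zero_iff_norm.mp u'.2])
  have hmp : MeasurePreserving (sphIso d T) (sigmaSph d) (sigmaSph d) :=
    ⟨(sphIso d T).continuous.measurable, sphIso_map_sigma d T⟩
  have h := hmp.integral_comp ((sphIso d T).toHomeomorph.measurableEmbedding)
      (fun w => gaussK d γ u' w)
  rw [← h]
  have e : (fun w => gaussK d γ u' ((sphIso d T) w)) = fun w => gaussK d γ u w := by
    funext w
    have hc : (((sphIso d T) w : Sph d) : Vd d) = T (w : Vd d) := rfl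
    rw [gaussK, gaussK, hc, ← hTu, ← map_sub, T.norm_map]
  rw [e]


def fker (d : ℕ) (γ : ℝ) : Vd d → Sph d → ℂ := fun v u =>
  Complex.exp (((2 * Real.sqrt γ * (inner ℝ (u:Vd d) v : ℝ) : ℝ) : ℂ) * Complex.I)

def gw (d : ℕ) : Vd d → ℝ := fun v => Real.exp (-‖v‖^2)

def cC (d : ℕ) : ℝ := Real.pi ^ (((d:ℝ)+1)/2)

lemma cC_pos (d : ℕ) : 0 < cC d := Real.rpow_pos_of_pos Real.pi_pos _

lemma fker_norm (d : ℕ) (γ : ℝ) (v : Vd d) (u : Sph d) : ‖fker d γ v u‖ = 1 := by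
  rw [fker, Complex.norm_exp]
  simp

lemma fker_cont (d : ℕ) (γ : ℝ) :
    Continuous (fun q : Vd d × Sph d => fker d γ q.1 q.2) := by
  apply Complex.continuous_exp.comp
  apply Continuous.mul _ continuous_const
  apply Complex.continuous_ofReal.comp
  exact continuous_const.mul
    (Continuous.inner (continuous_subtype_val.comp continuous_snd) continuous_fst)

lemma gw_cont (d : ℕ) : Continuous (gw d) :=
  Real.continuous_exp.comp (continuous_neg.comp ((continuous_norm).pow 2))

lemma gw_nonneg (d : ℕ) (v : Vd d) : 0 ≤ gw d v := (Real.exp_pos _).le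

lemma gw_integrable (d : ℕ) : Integrable (gw d) (volume : Measure (Vd d)) := by
  have h := (GaussianFourier.integrable_cexp_neg_mul_sq_norm_add
    (b := 1) (by norm_num) 0 (0 : Vd d)).norm
  apply h.congr
  filter_upwards with v
  rw [Complex.norm_exp]
  congr 1
  simp [gw, ← Complex.ofReal_pow, Complex.ofReal_re]

/-- The Fourier/heat-kernel representation of the Gaussian kernel. -/
lemma fker_rep (d : ℕ) {γ : ℝ} (hγ : 0 < γ) (u u' : Sph d) :
    ∫ v : Vd d, (gw d v : ℂ) * (fker d γ v u * (starRingEnd ℂ) (fker d γ v u'))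
      = ((cC d : ℝ) : ℂ) * ((gaussK d γ u u' : ℝ) : ℂ) := by
  have htrans : (fun v : Vd d => (gw d v : ℂ)
        * (fker d γ v u * (starRingEnd ℂ) (fker d γ v u')))
      = fun v : Vd d => Complex.exp (-(1:ℂ) * ‖v‖^2
          + (((2*Real.sqrt γ : ℝ)) : ℂ) * Complex.I
            * ((inner ℝ ((u:Vd d) - (u':Vd d)) v : ℝ) : ℂ)) := by
    funext v
    simp only [gw, fker]
    have hconj : (starRingEnd ℂ) (Complex.exp
          (((2 * Real.sqrt γ * (inner ℝ (u':Vd d) v : ℝ) : ℝ) : ℂ) * Complex.I))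
        = Complex.exp (-(((2 * Real.sqrt γ * (inner ℝ (u':Vd d) v : ℝ) : ℝ) : ℂ) * Complex.I)) := by
      rw [← Complex.exp_conj]
      congr 1
      rw [map_mul, Complex.conj_I, Complex.conj_ofReal]
      ring
    rw [hconj]
    rw [show ((Real.exp (-‖v‖^2) : ℝ) : ℂ) = Complex.exp ((-‖v‖^2 : ℝ) : ℂ) from
      Complex.ofReal_exp _]
    rw [← Complex.exp_add, ← Complex.exp_add]
    congr 1
    have hi : ((inner ℝ ((u:Vd d) - (u':Vd d)) v : ℝ) : ℂ)
        = ((inner ℝ (u:Vd d) v : ℝ) : ℂ) - ((inner ℝ (u':Vd d) v : ℝ) : ℂ) := by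
      rw [inner_sub_left]
      push_cast
      ring
    rw [hi]
    push_cast
    ring
  rw [htrans]
  rw [GaussianFourier.integral_cexp_neg_mul_sq_norm_add (by norm_num)
    ((((2*Real.sqrt γ : ℝ)) : ℂ) * Complex.I) ((u:Vd d) - (u':Vd d))]
  have hfr : (Module.finrank ℝ (Vd d) : ℂ) = (d:ℂ) + 1 := by simp
  congr 1
  · rw [cC, Complex.ofReal_cpow Real.pi_pos.le]
    rw [div_one]
    congr 1
    rw [hfr]
    push_cast
    ring
  · rw [gaussK, Complex.ofReal_exp]
    congr 1
    have hsq : (((2*Real.sqrt γ : ℝ)) : ℂ)^2 = ((4*γ : ℝ) : ℂ) := by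
      rw [← Complex.ofReal_pow]
      congr 1
      rw [mul_pow, Real.sq_sqrt hγ.le]
      ring
    rw [mul_pow, hsq, Complex.I_sq]
    push_cast
    ring


lemma gaussK_cont (d : ℕ) (γ : ℝ) :
    Continuous (fun p : Sph d × Sph d => gaussK d γ p.1 p.2) := by
  apply Real.continuous_exp.comp
  apply Continuous.mul continuous_const
  exact (Continuous.norm ((continuous_subtype_val.comp continuous_fst).sub
    (continuous_subtype_val.comp continuous_snd))).pow 2

lemma gaussK_le_one (d : ℕ) {γ : ℝ} (hγ : 0 < γ) (u v : Sph d) : |gaussK d γ u v| ≤ 1 := by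
  rw [gaussK, abs_of_nonneg (Real.exp_pos _).le]
  rw [Real.exp_le_one_iff]
  nlinarith [sq_nonneg ‖(u : Vd d) - (v : Vd d)‖, hγ.le]

lemma gaussK_integrable (d : ℕ) {γ : ℝ} (hγ : 0 < γ) (μ ν : Measure (Sph d))
    [IsFiniteMeasure μ] [IsFiniteMeasure ν] :
    Integrable (fun p : Sph d × Sph d => gaussK d γ p.1 p.2) (μ.prod ν) := by
  refine (integrable_const (1:ℝ)).mono' (gaussK_cont d γ).aestronglyMeasurable ?_
  filter_upwards with p
  rw [Real.norm_eq_abs]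
  exact gaussK_le_one d hγ p.1 p.2

lemma energy_rep (d : ℕ) {γ : ℝ} (hγ : 0 < γ) (μ ν : Measure (Sph d))
    [IsFiniteMeasure μ] [IsFiniteMeasure ν] :
    Integrable (fun v : Vd d => (gw d v : ℂ)
        * ((∫ u, fker d γ v u ∂μ) * (starRingEnd ℂ) (∫ u, fker d γ v u ∂ν))) volume ∧
    ∫ v : Vd d, (gw d v : ℂ)
        * ((∫ u, fker d γ v u ∂μ) * (starRingEnd ℂ) (∫ u, fker d γ v u ∂ν))
      = (((cC d * ∫ p : Sph d × Sph d, gaussK d γ p.1 p.2 ∂(μ.prod ν)) : ℝ) : ℂ) := by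
  have hΨc : Continuous (fun q : (Sph d × Sph d) × Vd d =>
      (gw d q.2 : ℂ) * (fker d γ q.2 q.1.1 * (starRingEnd ℂ) (fker d γ q.2 q.1.2))) := by
    have h0 : Continuous fun q : (Sph d × Sph d) × Vd d => ((gw d q.2 : ℝ) : ℂ) :=
      Complex.continuous_ofReal.comp ((gw_cont d).comp continuous_snd)
    have hp1 : Continuous fun q : (Sph d × Sph d) × Vd d => (q.2, q.1.1) := by fun_prop
    have hp2 : Continuous fun q : (Sph d × Sph d) × Vd d => (q.2, q.1.2) := by fun_prop
    have h1 : Continuous fun q : (Sph d × Sph d) × Vd d => fker d γ q.2 q.1.1 := by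
      simpa [Function.comp_def] using (fker_cont d γ).comp hp1
    have h2 : Continuous fun q : (Sph d × Sph d) × Vd d => fker d γ q.2 q.1.2 := by
      simpa [Function.comp_def] using (fker_cont d γ).comp hp2
    exact h0.mul (h1.mul h2.star)
  have hΨnorm : ∀ q : (Sph d × Sph d) × Vd d,
      ‖(gw d q.2 : ℂ) * (fker d γ q.2 q.1.1 * (starRingEnd ℂ) (fker d γ q.2 q.1.2))‖
        = gw d q.2 := by
    intro q
    rw [norm_mul, norm_mul, RCLike.norm_conj, fker_norm, fker_norm, Complex.norm_real,
      Real.norm_eq_abs, abs_of_nonneg (gw_nonneg d _)]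
    ring
  have hΨint : Integrable (fun q : (Sph d × Sph d) × Vd d =>
      (gw d q.2 : ℂ) * (fker d γ q.2 q.1.1 * (starRingEnd ℂ) (fker d γ q.2 q.1.2)))
      ((μ.prod ν).prod volume) := by
    refine ((integrable_const (1:ℝ)).mul_prod (gw_integrable d)).mono'
      hΨc.aestronglyMeasurable ?_
    filter_upwards with q
    rw [hΨnorm q, one_mul]
  have hΨswapint : Integrable (fun q : Vd d × (Sph d × Sph d) =>
      (gw d q.1 : ℂ) * (fker d γ q.1 q.2.1 * (starRingEnd ℂ) (fker d γ q.1 q.2.2)))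
      (volume.prod (μ.prod ν)) := by
    refine ((gw_integrable d).mul_prod (integrable_const (1:ℝ))).mono'
      (hΨc.comp (continuous_snd.prodMk continuous_fst)).aestronglyMeasurable ?_
    filter_upwards with q
    rw [hΨnorm ((q.2, q.1))]
    rw [mul_one]
  have hInner : ∀ v : Vd d,
      ∫ p : Sph d × Sph d, (gw d v : ℂ)
          * (fker d γ v p.1 * (starRingEnd ℂ) (fker d γ v p.2)) ∂(μ.prod ν)
        = (gw d v : ℂ) * ((∫ u, fker d γ v u ∂μ)
            * (starRingEnd ℂ) (∫ u, fker d γ v u ∂ν)) := by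
    intro v
    rw [integral_const_mul]
    rw [integral_prod_mul (fun u => fker d γ v u)
      (fun u => (starRingEnd ℂ) (fker d γ v u))]
    rw [integral_conj]
  have hZint : Integrable (fun v : Vd d => ∫ p : Sph d × Sph d, (gw d v : ℂ)
      * (fker d γ v p.1 * (starRingEnd ℂ) (fker d γ v p.2)) ∂(μ.prod ν)) volume := by
    have := hΨswapint.integral_prod_left
    exact this
  constructor
  · exact hZint.congr (Filter.Eventually.of_forall fun v => hInner v)
  · have e1 : (fun v : Vd d => (gw d v : ℂ) * ((∫ u, fker d γ v u ∂μ)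
        * (starRingEnd ℂ) (∫ u, fker d γ v u ∂ν)))
        = fun v => ∫ p : Sph d × Sph d, (gw d v : ℂ)
            * (fker d γ v p.1 * (starRingEnd ℂ) (fker d γ v p.2)) ∂(μ.prod ν) :=
      funext fun v => (hInner v).symm
    rw [e1]
    have hswap := MeasureTheory.integral_integral_swap
      (f := fun (v : Vd d) (p : Sph d × Sph d) => (gw d v : ℂ)
        * (fker d γ v p.1 * (starRingEnd ℂ) (fker d γ v p.2)))
      (μ := (volume : Measure (Vd d))) (ν := μ.prod ν) hΨswapint
    rw [hswap]
    have e2 : (fun p : Sph d × Sph d => ∫ v : Vd d, (gw d v : ℂ)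
        * (fker d γ v p.1 * (starRingEnd ℂ) (fker d γ v p.2)) ∂volume)
        = fun p => ((cC d : ℝ) : ℂ) * ((gaussK d γ p.1 p.2 : ℝ) : ℂ) :=
      funext fun p => fker_rep d hγ p.1 p.2
    rw [e2, integral_const_mul]
    have e3 : ∫ p : Sph d × Sph d, ((gaussK d γ p.1 p.2 : ℝ) : ℂ) ∂(μ.prod ν)
        = (((∫ p : Sph d × Sph d, gaussK d γ p.1 p.2 ∂(μ.prod ν) : ℝ)) : ℂ) :=
      integral_ofReal (𝕜 := ℂ)
    rw [e3, ← Complex.ofReal_mul]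

lemma point_ineq (g : ℝ) (hg : 0 ≤ g) (z w : ℂ) :
    2 * ((g:ℂ) * (z * (starRingEnd ℂ) w)).re
      ≤ ((g:ℂ) * (z * (starRingEnd ℂ) z)).re + ((g:ℂ) * (w * (starRingEnd ℂ) w)).re := by
  simp only [Complex.mul_re, Complex.mul_im, Complex.conj_re, Complex.conj_im,
    Complex.ofReal_re, Complex.ofReal_im]
  nlinarith [sq_nonneg (z.re - w.re), sq_nonneg (z.im - w.im), hg]


lemma re_rep (d : ℕ) {γ : ℝ} (hγ : 0 < γ) (μ ν : Measure (Sph d))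
    [IsFiniteMeasure μ] [IsFiniteMeasure ν] :
    Integrable (fun v : Vd d => ((gw d v : ℂ)
        * ((∫ u, fker d γ v u ∂μ) * (starRingEnd ℂ) (∫ u, fker d γ v u ∂ν))).re) volume ∧
    ∫ v : Vd d, ((gw d v : ℂ)
        * ((∫ u, fker d γ v u ∂μ) * (starRingEnd ℂ) (∫ u, fker d γ v u ∂ν))).re
      = cC d * ∫ p : Sph d × Sph d, gaussK d γ p.1 p.2 ∂(μ.prod ν) := by
  obtain ⟨hI, hR⟩ := energy_rep d hγ μ ν
  constructor
  · simpa using hI.re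
  · have h := integral_re hI
    rw [hR] at h
    simpa using h

end SigmaMin

open SigmaMin in
/-- For every `γ > 0` and every Borel probability measure `μ` on `S^d`
(`d ≥ 1`), the uniform measure `σ_d` satisfies `I_{G_γ}[σ_d] ≤ I_{G_γ}[μ]`:
`σ_d` minimizes the Gaussian pairwise potential energy. -/
theorem sigma_minimizes_gaussian_energy (d : ℕ) (hd : 1 ≤ d) (γ : ℝ) (hγ : 0 < γ)
    (μ : Measure (Sph d)) [IsProbabilityMeasure μ] :
    energy (gaussK d γ) (sigmaSph d) ≤ energy (gaussK d γ) μ := by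
  haveI hPσ : IsProbabilityMeasure (sigmaSph d) := sigma_isProbability d hd
  set σ := sigmaSph d with hσdef
  obtain ⟨hIμμ, hRμμ⟩ := re_rep d hγ μ μ
  obtain ⟨hIσσ, hRσσ⟩ := re_rep d hγ σ σ
  obtain ⟨hIμσ, hRμσ⟩ := re_rep d hγ μ σ
  -- the integrated positivity inequality
  have h1 : ∫ v : Vd d, (2 * ((gw d v : ℂ)
        * ((∫ u, fker d γ v u ∂μ) * (starRingEnd ℂ) (∫ u, fker d γ v u ∂σ))).re) ∂volume
      ≤ ∫ v : Vd d, (((gw d v : ℂ)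
        * ((∫ u, fker d γ v u ∂μ) * (starRingEnd ℂ) (∫ u, fker d γ v u ∂μ))).re
        + ((gw d v : ℂ)
        * ((∫ u, fker d γ v u ∂σ) * (starRingEnd ℂ) (∫ u, fker d γ v u ∂σ))).re) ∂volume := by
    refine integral_mono (hIμσ.const_mul 2) (hIμμ.add hIσσ) (fun v => ?_)
    exact point_ineq (gw d v) (gw_nonneg d v) (∫ u, fker d γ v u ∂μ) (∫ u, fker d γ v u ∂σ)
  rw [integral_const_mul, integral_add hIμμ hIσσ, hRμσ, hRμμ, hRσσ] at h1
  -- invariance: both mixed and pure σ energies equal the constant potential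
  have u0 : Sph d := ⟨EuclideanSpace.single 0 1, by
    rw [mem_sphere_zero_iff_norm]; simp⟩
  have hpot : ∀ (α : Measure (Sph d)) [IsProbabilityMeasure α],
      ∫ p : Sph d × Sph d, gaussK d γ p.1 p.2 ∂(α.prod σ)
        = ∫ w, gaussK d γ u0 w ∂σ := by
    intro α hα
    rw [integral_prod _ (gaussK_integrable d hγ α σ)]
    have e : (fun x : Sph d => ∫ y, gaussK d γ x y ∂σ)
        = fun _ => ∫ w, gaussK d γ u0 w ∂σ :=
      funext fun x => by rw [hσdef]; exact potential_const d γ x u0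
    rw [e, integral_const]
    simp
  have hEμσ : ∫ p : Sph d × Sph d, gaussK d γ p.1 p.2 ∂(μ.prod σ)
      = ∫ p : Sph d × Sph d, gaussK d γ p.1 p.2 ∂(σ.prod σ) := by
    rw [hpot μ, hpot σ]
  -- energies as product integrals
  have hEeq : ∀ (α : Measure (Sph d)) [IsProbabilityMeasure α],
      energy (gaussK d γ) α = ∫ p : Sph d × Sph d, gaussK d γ p.1 p.2 ∂(α.prod α) := by
    intro α hα
    rw [energy, integral_prod _ (gaussK_integrable d hγ α α)]
  rw [hEeq μ, hEeq σ]
  have hc := cC_pos d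
  rw [hEμσ] at h1
  exact le_of_mul_le_mul_left (by linarith) hc

end
end

section
/- For every γ > 0, the uniform probability measure σ_d is the unique minimizer of the Gaussian energy among Borel probability measures on S^d: if μ is a Borel probability measure on S^d (d ≥ 1) with I_{G_γ}[μ] ≤ I_{G_γ}[σ_d], then μ = σ_d. -/
open MeasureTheory

noncomputable section

open Metric Real
open scoped RealInnerProductSpace

set_option maxHeartbeats 1000000

namespace SphAux

variable {d : ℕ} {γ : ℝ}


variable {d : ℕ} {γ : ℝ}

lemma norm_coe (u : Sph d) : ‖(u : EuclideanSpace ℝ (Fin (d+1)))‖ = 1 := by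
  simpa using mem_sphere_zero_iff_norm.mp u.2

lemma cont_integrable {f : Sph d → ℝ} (hf : Continuous f) (ν : Measure (Sph d))
    [IsFiniteMeasure ν] : Integrable f ν :=
  hf.integrable_of_hasCompactSupport (HasCompactSupport.of_compactSpace f)

lemma gaussK_cont : Continuous (fun p : Sph d × Sph d => gaussK d γ p.1 p.2) := by
  unfold gaussK; fun_prop

lemma gaussK_cont_right (u : Sph d) : Continuous (fun v : Sph d => gaussK d γ u v) := by
  unfold gaussK; fun_prop

lemma gaussK_cont_left (v : Sph d) : Continuous (fun u : Sph d => gaussK d γ u v) := by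
  unfold gaussK; fun_prop

lemma norm_sub_le_two (u v : Sph d) :
    ‖(u : EuclideanSpace ℝ (Fin (d+1))) - (v : EuclideanSpace ℝ (Fin (d+1)))‖ ≤ 2 := by
  have h := norm_sub_le (u : EuclideanSpace ℝ (Fin (d+1))) (v : EuclideanSpace ℝ (Fin (d+1)))
  rw [norm_coe, norm_coe] at h; linarith

lemma gaussK_pos (hγ : 0 < γ) (u v : Sph d) : Real.exp (-γ * 4) ≤ gaussK d γ u v := by
  apply Real.exp_le_exp.2
  have h2 := norm_sub_le_two u v
  have h0 := norm_nonneg ((u : EuclideanSpace ℝ (Fin (d+1))) - (v : EuclideanSpace ℝ (Fin (d+1))))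
  have ht : ‖(u : EuclideanSpace ℝ (Fin (d+1))) - (v : EuclideanSpace ℝ (Fin (d+1)))‖^2 ≤ 4 := by
    nlinarith
  have := mul_le_mul_of_nonneg_left ht hγ.le
  linarith

lemma gaussK_pos' (u v : Sph d) : 0 < gaussK d γ u v := Real.exp_pos _

lemma gaussK_le_one (hγ : 0 < γ) (u v : Sph d) : gaussK d γ u v ≤ 1 := by
  apply Real.exp_le_one_iff.2
  have := mul_le_mul_of_nonneg_left (sq_nonneg ‖(u : EuclideanSpace ℝ (Fin (d+1))) - (v : EuclideanSpace ℝ (Fin (d+1)))‖) hγ.le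
  linarith

/-- A point on the sphere. -/
def pt (d : ℕ) : Sph d := ⟨EuclideanSpace.single 0 1, by
  simp [mem_sphere_zero_iff_norm, EuclideanSpace.norm_single]⟩

/-- The potential of a measure. -/
def pot (d : ℕ) (γ : ℝ) (ν : Measure (Sph d)) (u : Sph d) : ℝ := ∫ v, gaussK d γ u v ∂ν

lemma pot_cont (ν : Measure (Sph d)) [IsProbabilityMeasure ν] (hγ : 0 < γ) :
    Continuous (pot d γ ν) := by
  apply continuous_of_dominated (bound := fun _ => (1:ℝ))
  · exact fun u => (cont_integrable (gaussK_cont_right u) ν).aestronglyMeasurable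
  · intro u
    filter_upwards with v
    rw [Real.norm_eq_abs, abs_of_pos (gaussK_pos' u v)]
    exact gaussK_le_one hγ u v
  · exact integrable_const _
  · filter_upwards with v using gaussK_cont_left v

lemma energy_eq_int_pot (ν : Measure (Sph d)) : energy (gaussK d γ) ν = ∫ u, pot d γ ν u ∂ν := rfl

lemma energy_pos (hγ : 0 < γ) (μ : Measure (Sph d)) [IsProbabilityMeasure μ] :
    0 < energy (gaussK d γ) μ := by
  have hlow : ∀ u : Sph d, Real.exp (-γ * 4) ≤ pot d γ μ u := by
    intro u
    calc Real.exp (-γ * 4) = ∫ _v : Sph d, Real.exp (-γ * 4) ∂μ := by simp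
    _ ≤ pot d γ μ u :=
        integral_mono (integrable_const _) (cont_integrable (gaussK_cont_right u) μ)
          (fun v => gaussK_pos hγ u v)
  calc (0:ℝ) < Real.exp (-γ * 4) := Real.exp_pos _
  _ = ∫ _u : Sph d, Real.exp (-γ * 4) ∂μ := by simp
  _ ≤ energy (gaussK d γ) μ :=
      integral_mono (integrable_const _) (cont_integrable (pot_cont μ hγ) μ) hlow



/-- Restrict a linear isometry equivalence of the ambient space to the sphere. -/
def sphMap (L : EuclideanSpace ℝ (Fin (d+1)) ≃ₗᵢ[ℝ] EuclideanSpace ℝ (Fin (d+1))) :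
    Sph d ≃ᵢ Sph d where
  toFun x := ⟨L x, by
    rw [mem_sphere_zero_iff_norm, L.norm_map]
    simpa using mem_sphere_zero_iff_norm.mp x.2⟩
  invFun x := ⟨L.symm x, by
    rw [mem_sphere_zero_iff_norm, L.symm.norm_map]
    simpa using mem_sphere_zero_iff_norm.mp x.2⟩
  left_inv x := by ext; simp
  right_inv x := by ext; simp
  isometry_toFun := by
    intro x y
    rw [Subtype.edist_eq, Subtype.edist_eq]
    exact L.isometry.edist_eq _ _

lemma sphMap_apply (L : EuclideanSpace ℝ (Fin (d+1)) ≃ₗᵢ[ℝ] EuclideanSpace ℝ (Fin (d+1)))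
    (x : Sph d) : (sphMap L x : EuclideanSpace ℝ (Fin (d+1))) = L x := rfl

/-- Transitivity: some isometry of the sphere sends `u` to `v`. -/
lemma exists_isometry (u v : Sph d) : ∃ e : Sph d ≃ᵢ Sph d, e u = v := by
  have hn : ‖(u : EuclideanSpace ℝ (Fin (d+1)))‖ = ‖(v : EuclideanSpace ℝ (Fin (d+1)))‖ := by
    have hu := mem_sphere_zero_iff_norm.mp u.2
    have hv := mem_sphere_zero_iff_norm.mp v.2
    simp_all
  exact ⟨sphMap (Submodule.reflection (ℝ ∙ ((u : EuclideanSpace ℝ (Fin (d+1))) - v))ᗮ),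
    Subtype.ext (Submodule.reflection_sub hn)⟩

/-- gaussK is invariant under sphere isometries. -/
lemma gaussK_isometry (e : Sph d ≃ᵢ Sph d) (u v : Sph d) :
    gaussK d γ (e u) (e v) = gaussK d γ u v := by
  unfold gaussK
  have h : ‖((e u) : EuclideanSpace ℝ (Fin (d+1))) - ((e v) : EuclideanSpace ℝ (Fin (d+1)))‖
      = ‖(u : EuclideanSpace ℝ (Fin (d+1))) - (v : EuclideanSpace ℝ (Fin (d+1)))‖ := by
    rw [← dist_eq_norm, ← dist_eq_norm, ← Subtype.dist_eq, ← Subtype.dist_eq]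
    exact e.isometry.dist_eq u v
  rw [h]

/-- sigmaSph is invariant under sphere isometries. -/
lemma sigmaSph_isometry_map (e : Sph d ≃ᵢ Sph d) :
    Measure.map e (sigmaSph d) = sigmaSph d := by
  unfold sigmaSph
  rw [Measure.map_smul, e.map_hausdorffMeasure]




/-- The half-kernel. -/
def kfun (d : ℕ) (γ : ℝ) (x : EuclideanSpace ℝ (Fin (d+1))) (u : Sph d) : ℝ :=
  rexp (-(2*γ) * ‖(u : EuclideanSpace ℝ (Fin (d+1))) - x‖^2)

def Cg (d : ℕ) (γ : ℝ) : ℝ := ∫ x : EuclideanSpace ℝ (Fin (d+1)), rexp (-(4*γ) * ‖x‖^2)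

lemma Cg_pos (hγ : 0 < γ) : 0 < Cg d γ := by
  rw [Cg, GaussianFourier.integral_rexp_neg_mul_sq_norm (by positivity)]
  positivity

lemma gauss_integrable {c : ℝ} (hc : 0 < c) :
    Integrable (fun x : EuclideanSpace ℝ (Fin (d+1)) => rexp (-c * ‖x‖^2)) := by
  have h := (GaussianFourier.integrable_cexp_neg_mul_sq_norm_add (V := EuclideanSpace ℝ (Fin (d+1)))
    (b := (c : ℂ)) (by simpa using hc) 0 0).norm
  apply h.congr
  filter_upwards with x
  rw [Complex.norm_exp]
  norm_num
  left
  norm_cast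

lemma norm_coe' (u : Sph d) : ‖(u : EuclideanSpace ℝ (Fin (d+1)))‖ = 1 := by
  simpa using mem_sphere_zero_iff_norm.mp u.2

lemma kfun_cont_x (u : Sph d) : Continuous (fun x : EuclideanSpace ℝ (Fin (d+1)) => kfun d γ x u) := by
  unfold kfun; fun_prop

lemma kfun_cont_u (x : EuclideanSpace ℝ (Fin (d+1))) : Continuous (fun u : Sph d => kfun d γ x u) := by
  unfold kfun; fun_prop

lemma kfun_cont2 : Continuous (fun p : EuclideanSpace ℝ (Fin (d+1)) × Sph d => kfun d γ p.1 p.2) := by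
  unfold kfun; fun_prop

lemma kfun_pos (x : EuclideanSpace ℝ (Fin (d+1))) (u : Sph d) : 0 < kfun d γ x u := exp_pos _

lemma kfun_le_one (hγ : 0 < γ) (x : EuclideanSpace ℝ (Fin (d+1))) (u : Sph d) :
    kfun d γ x u ≤ 1 := by
  apply exp_le_one_iff.2
  have := mul_le_mul_of_nonneg_left (sq_nonneg ‖(u : EuclideanSpace ℝ (Fin (d+1))) - x‖) hγ.le
  nlinarith

lemma kfun_le (hγ : 0 < γ) (x : EuclideanSpace ℝ (Fin (d+1))) (u : Sph d) :
    kfun d γ x u ≤ rexp (2*γ) * rexp (-γ * ‖x‖^2) := by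
  rw [← exp_add]
  apply exp_le_exp.2
  have h1 : |‖x‖ - 1| ≤ ‖(u : EuclideanSpace ℝ (Fin (d+1))) - x‖ := by
    rw [norm_sub_rev]
    simpa [norm_coe'] using abs_norm_sub_norm_le x (u : EuclideanSpace ℝ (Fin (d+1)))
  have h2 : (‖x‖ - 1)^2 ≤ ‖(u : EuclideanSpace ℝ (Fin (d+1))) - x‖^2 := by
    rw [← sq_abs (‖x‖ - 1)]
    exact pow_le_pow_left₀ (abs_nonneg _) h1 2
  nlinarith [mul_le_mul_of_nonneg_left h2 (by positivity : (0:ℝ) ≤ 2*γ),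
    mul_nonneg hγ.le (sq_nonneg (‖x‖ - 2))]

/-- Gaussian convolution square identity, pointwise. -/
lemma kfun_mul (hγ : 0 < γ) (u v : Sph d) (x : EuclideanSpace ℝ (Fin (d+1))) :
    kfun d γ x u * kfun d γ x v =
      rexp (-γ * ‖(u : EuclideanSpace ℝ (Fin (d+1))) - (v : EuclideanSpace ℝ (Fin (d+1)))‖^2) *
        rexp (-(4*γ) * ‖x - (2:ℝ)⁻¹ • ((u : EuclideanSpace ℝ (Fin (d+1))) + v)‖^2) := by
  rw [kfun, kfun, ← exp_add, ← exp_add]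
  congr 1
  set m : EuclideanSpace ℝ (Fin (d+1)) := (2:ℝ)⁻¹ • ((u : EuclideanSpace ℝ (Fin (d+1))) + v) with hm
  have hpar' := parallelogram_law_with_norm ℝ
    ((u:EuclideanSpace ℝ (Fin (d+1))) - x) ((v:EuclideanSpace ℝ (Fin (d+1))) - x)
  have hpar : ‖((u:EuclideanSpace ℝ (Fin (d+1))) - x) + ((v:EuclideanSpace ℝ (Fin (d+1))) - x)‖^2
      + ‖((u:EuclideanSpace ℝ (Fin (d+1))) - x) - ((v:EuclideanSpace ℝ (Fin (d+1))) - x)‖^2 =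
      2 * (‖(u:EuclideanSpace ℝ (Fin (d+1))) - x‖^2 + ‖(v:EuclideanSpace ℝ (Fin (d+1))) - x‖^2) := by
    ring_nf; ring_nf at hpar'; linarith
  have he1 : ((u:EuclideanSpace ℝ (Fin (d+1))) - x) + ((v:EuclideanSpace ℝ (Fin (d+1))) - x)
      = (2:ℝ) • (m - x) := by
    rw [hm, smul_sub, smul_smul]
    norm_num
    module
  have he2 : ((u:EuclideanSpace ℝ (Fin (d+1))) - x) - ((v:EuclideanSpace ℝ (Fin (d+1))) - x)
      = (u:EuclideanSpace ℝ (Fin (d+1))) - v := by abel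
  rw [he1, he2, norm_smul] at hpar
  simp only [Real.norm_ofNat, mul_pow] at hpar
  have hxm : ‖x - m‖^2 = ‖m - x‖^2 := by rw [norm_sub_rev]
  linear_combination γ * hpar + 4*γ*hxm


lemma cont_integrable' {α : Type*} [TopologicalSpace α] [CompactSpace α] [MeasurableSpace α]
    [OpensMeasurableSpace α] {f : α → ℝ} (hf : Continuous f) (ν : Measure α)
    [IsFiniteMeasure ν] : Integrable f ν :=
  hf.integrable_of_hasCompactSupport (HasCompactSupport.of_compactSpace f)

lemma claim1 (hγ : 0 < γ) (u v : Sph d) :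
    ∫ x : EuclideanSpace ℝ (Fin (d+1)), kfun d γ x u * kfun d γ x v
      = Cg d γ * gaussK d γ u v := by
  simp_rw [kfun_mul hγ u v]
  rw [integral_const_mul]
  rw [show ∀ a b : ℝ, a * b = b * a from fun a b => mul_comm a b]
  congr 1
  exact integral_sub_right_eq_self
    (fun y : EuclideanSpace ℝ (Fin (d+1)) => rexp (-(4*γ) * ‖y‖^2)) _

/-- The smoothed measure. -/
def Fm (d : ℕ) (γ : ℝ) (ν : Measure (Sph d)) (x : EuclideanSpace ℝ (Fin (d+1))) : ℝ :=
  ∫ u, kfun d γ x u ∂ν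

variable (ν ν₁ ν₂ : Measure (Sph d)) [IsProbabilityMeasure ν] [IsProbabilityMeasure ν₁]
  [IsProbabilityMeasure ν₂]

lemma Fm_nonneg (x : EuclideanSpace ℝ (Fin (d+1))) : 0 ≤ Fm d γ ν x :=
  integral_nonneg fun u => (kfun_pos x u).le

lemma Fm_le_one (hγ : 0 < γ) (x : EuclideanSpace ℝ (Fin (d+1))) : Fm d γ ν x ≤ 1 := by
  have h : Fm d γ ν x ≤ ∫ _u : Sph d, (1:ℝ) ∂ν :=
    integral_mono (cont_integrable' (kfun_cont_u x) ν) (integrable_const _)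
      (fun u => kfun_le_one hγ x u)
  simpa using h

lemma Fm_le (hγ : 0 < γ) (x : EuclideanSpace ℝ (Fin (d+1))) :
    Fm d γ ν x ≤ rexp (2*γ) * rexp (-γ * ‖x‖^2) := by
  have h : Fm d γ ν x ≤ ∫ _u : Sph d, rexp (2*γ) * rexp (-γ * ‖x‖^2) ∂ν :=
    integral_mono (cont_integrable' (kfun_cont_u x) ν) (integrable_const _)
      (fun u => kfun_le hγ x u)
  simpa using h

lemma Fm_cont (hγ : 0 < γ) : Continuous (Fm d γ ν) := by
  apply continuous_of_dominated (bound := fun _ => (1:ℝ))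
  · exact fun x => (cont_integrable' (kfun_cont_u x) ν).aestronglyMeasurable
  · intro x
    filter_upwards with u
    rw [Real.norm_eq_abs, abs_of_pos (kfun_pos x u)]
    exact kfun_le_one hγ x u
  · exact integrable_const _
  · filter_upwards with u using kfun_cont_x u

lemma Fm_mul_integrable (hγ : 0 < γ) :
    Integrable (fun x => Fm d γ ν₁ x * Fm d γ ν₂ x) := by
  apply Integrable.mono' ((gauss_integrable hγ).const_mul (rexp (2*γ)))
    (((Fm_cont ν₁ hγ).mul (Fm_cont ν₂ hγ)).aestronglyMeasurable)
  filter_upwards with x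
  rw [Real.norm_eq_abs, Pi.mul_apply, abs_of_nonneg (mul_nonneg (Fm_nonneg ν₁ x) (Fm_nonneg ν₂ x))]
  have h : Fm d γ ν₁ x * Fm d γ ν₂ x ≤ (rexp (2*γ) * rexp (-γ * ‖x‖^2)) * 1 :=
    mul_le_mul (Fm_le ν₁ hγ x) (Fm_le_one ν₂ hγ x) (Fm_nonneg ν₂ x) (by positivity)
  simpa using h

lemma claim2 (hγ : 0 < γ) :
    ∫ x, Fm d γ ν₁ x * Fm d γ ν₂ x
      = Cg d γ * ∫ u, ∫ v, gaussK d γ u v ∂ν₂ ∂ν₁ := by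
  have hG : Integrable (fun p : Sph d × Sph d => gaussK d γ p.1 p.2) (ν₁.prod ν₂) := by
    apply cont_integrable'
    unfold gaussK; fun_prop
  -- uncurried kernel product is integrable on volume.prod (ν₁.prod ν₂)
  have hint : Integrable
      (Function.uncurry fun (x : EuclideanSpace ℝ (Fin (d+1))) (p : Sph d × Sph d) =>
        kfun d γ x p.1 * kfun d γ x p.2) (volume.prod (ν₁.prod ν₂)) := by
    have hg0 : Integrable (fun x : EuclideanSpace ℝ (Fin (d+1)) =>
        rexp (2*γ) * rexp (-γ * ‖x‖^2)) := (gauss_integrable hγ).const_mul _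
    have hmap : Measure.map Prod.fst
        ((volume : Measure (EuclideanSpace ℝ (Fin (d+1)))).prod (ν₁.prod ν₂))
        = (volume : Measure (EuclideanSpace ℝ (Fin (d+1)))) := by
      rw [Measure.map_fst_prod]; simp
    have hcomp : Integrable ((fun x : EuclideanSpace ℝ (Fin (d+1)) =>
        rexp (2*γ) * rexp (-γ * ‖x‖^2)) ∘ Prod.fst)
        ((volume : Measure (EuclideanSpace ℝ (Fin (d+1)))).prod (ν₁.prod ν₂)) := by
      have h1 : AEStronglyMeasurable (fun x : EuclideanSpace ℝ (Fin (d+1)) =>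
          rexp (2*γ) * rexp (-γ * ‖x‖^2)) (Measure.map Prod.fst
          ((volume : Measure (EuclideanSpace ℝ (Fin (d+1)))).prod (ν₁.prod ν₂))) := by
        rw [hmap]; exact hg0.aestronglyMeasurable
      have h2 : Integrable (fun x : EuclideanSpace ℝ (Fin (d+1)) =>
          rexp (2*γ) * rexp (-γ * ‖x‖^2)) (Measure.map Prod.fst
          ((volume : Measure (EuclideanSpace ℝ (Fin (d+1)))).prod (ν₁.prod ν₂))) := by
        rw [hmap]; exact hg0
      exact (integrable_map_measure h1 measurable_fst.aemeasurable).mp h2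
    apply Integrable.mono' hcomp
    · apply Continuous.aestronglyMeasurable
      have hc : Continuous fun z : EuclideanSpace ℝ (Fin (d+1)) × (Sph d × Sph d) =>
          kfun d γ z.1 z.2.1 * kfun d γ z.1 z.2.2 := by
        unfold kfun; fun_prop
      exact hc
    · filter_upwards with z
      rw [Function.uncurry, Real.norm_eq_abs,
        abs_of_nonneg (mul_nonneg (kfun_pos _ _).le (kfun_pos _ _).le)]
      have h : kfun d γ z.1 z.2.1 * kfun d γ z.1 z.2.2
          ≤ (rexp (2*γ) * rexp (-γ * ‖z.1‖^2)) * 1 :=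
        mul_le_mul (kfun_le hγ _ _) (kfun_le_one hγ _ _) (kfun_pos _ _).le (by positivity)
      simpa using h
  calc ∫ x, Fm d γ ν₁ x * Fm d γ ν₂ x
      = ∫ x, ∫ p : Sph d × Sph d, kfun d γ x p.1 * kfun d γ x p.2 ∂(ν₁.prod ν₂) := by
        congr 1; funext x
        exact (integral_prod_mul (μ := ν₁) (ν := ν₂)
          (fun u : Sph d => kfun d γ x u) (fun v : Sph d => kfun d γ x v)).symm
  _ = ∫ p : Sph d × Sph d, ∫ x, kfun d γ x p.1 * kfun d γ x p.2 ∂(volume) ∂(ν₁.prod ν₂) :=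
        integral_integral_swap hint
  _ = ∫ p : Sph d × Sph d, Cg d γ * gaussK d γ p.1 p.2 ∂(ν₁.prod ν₂) := by
        congr 1; funext p; exact claim1 hγ p.1 p.2
  _ = Cg d γ * ∫ p : Sph d × Sph d, gaussK d γ p.1 p.2 ∂(ν₁.prod ν₂) := integral_const_mul _ _
  _ = Cg d γ * ∫ u, ∫ v, gaussK d γ u v ∂ν₂ ∂ν₁ := by rw [integral_integral hG]



/-- Exponential test functions. -/
def gen (d : ℕ) (t : EuclideanSpace ℝ (Fin (d+1))) : C(Sph d, ℝ) :=
  ⟨fun u => rexp ⟪(u : EuclideanSpace ℝ (Fin (d+1))), t⟫,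
    Real.continuous_exp.comp (continuous_subtype_val.inner continuous_const)⟩

lemma gen_apply (t : EuclideanSpace ℝ (Fin (d+1))) (u : Sph d) :
    gen d t u = rexp ⟪(u : EuclideanSpace ℝ (Fin (d+1))), t⟫ := rfl

lemma gen_mul (t s : EuclideanSpace ℝ (Fin (d+1))) :
    gen d t * gen d s = gen d (t + s) := by
  ext u
  simp only [ContinuousMap.mul_apply, gen_apply, inner_add_right, ← Real.exp_add]

lemma gen_zero : gen d 0 = 1 := by
  ext u
  simp [gen_apply]

lemma mem_span_of_mem_adjoin {f : C(Sph d, ℝ)}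
    (hf : f ∈ Algebra.adjoin ℝ (Set.range (gen d))) :
    f ∈ Submodule.span ℝ (Set.range (gen d)) := by
  let M : Submonoid C(Sph d, ℝ) :=
    { carrier := Set.range (gen d)
      one_mem' := ⟨0, gen_zero⟩
      mul_mem' := by
        rintro a b ⟨t, rfl⟩ ⟨s, rfl⟩
        exact ⟨t + s, (gen_mul t s).symm⟩ }
  have h1 : f ∈ Submodule.span ℝ (Submonoid.closure (Set.range (gen d)) : Set (C(Sph d, ℝ))) := by
    rw [← Algebra.adjoin_eq_span]
    exact hf
  have h2 : Submonoid.closure (Set.range (gen d)) = M := Submonoid.closure_eq M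
  rwa [h2] at h1

lemma sep : (Algebra.adjoin ℝ (Set.range (gen d))).SeparatesPoints := by
  intro u v huv
  refine ⟨⇑(gen d ((u : EuclideanSpace ℝ (Fin (d+1))) - v)),
    ⟨gen d ((u : EuclideanSpace ℝ (Fin (d+1))) - v),
      Algebra.subset_adjoin (Set.mem_range_self _), rfl⟩, ?_⟩
  simp only [gen_apply]
  intro hcontra
  have h1 : ⟪(u : EuclideanSpace ℝ (Fin (d+1))), (u : EuclideanSpace ℝ (Fin (d+1))) - v⟫
      = ⟪(v : EuclideanSpace ℝ (Fin (d+1))), (u : EuclideanSpace ℝ (Fin (d+1))) - v⟫ :=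
    Real.exp_eq_exp.mp hcontra
  have h2 : ⟪(u : EuclideanSpace ℝ (Fin (d+1))) - v,
      (u : EuclideanSpace ℝ (Fin (d+1))) - v⟫ = 0 := by
    rw [inner_sub_left]; linarith
  have h3 : (u : EuclideanSpace ℝ (Fin (d+1))) - v ≠ 0 :=
    sub_ne_zero.mpr (fun h => huv (Subtype.coe_injective h))
  exact h3 (inner_self_eq_zero.mp h2)

variable (μ σ' : Measure (Sph d)) [IsProbabilityMeasure μ] [IsProbabilityMeasure σ']

lemma integral_eq_on_adjoin
    (h : ∀ t, ∫ u, gen d t u ∂μ = ∫ u, gen d t u ∂σ')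
    {f : C(Sph d, ℝ)} (hf : f ∈ Algebra.adjoin ℝ (Set.range (gen d))) :
    ∫ u, f u ∂μ = ∫ u, f u ∂σ' := by
  have hf' := mem_span_of_mem_adjoin hf
  clear hf
  induction hf' using Submodule.span_induction with
  | mem g hg => obtain ⟨t, rfl⟩ := hg; exact h t
  | zero => simp
  | add g₁ g₂ _ _ ih1 ih2 =>
      have e1 : ∀ ν : Measure (Sph d), IsProbabilityMeasure ν →
          ∫ u, (g₁ + g₂) u ∂ν = ∫ u, g₁ u ∂ν + ∫ u, g₂ u ∂ν := by
        intro ν hν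
        haveI := hν
        simp only [ContinuousMap.add_apply]
        exact integral_add (cont_integrable' g₁.continuous ν) (cont_integrable' g₂.continuous ν)
      rw [e1 μ inferInstance, e1 σ' inferInstance, ih1, ih2]
  | smul c g _ ih =>
      simp only [ContinuousMap.coe_smul, Pi.smul_apply, smul_eq_mul]
      rw [integral_const_mul, integral_const_mul, ih]

lemma integral_eq_all
    (h : ∀ t, ∫ u, gen d t u ∂μ = ∫ u, gen d t u ∂σ') (g : C(Sph d, ℝ)) :
    ∫ u, g u ∂μ = ∫ u, g u ∂σ' := by
  have key : ∀ ε : ℝ, 0 < ε → |(∫ u, g u ∂μ) - ∫ u, g u ∂σ'| ≤ 2 * ε := by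
    intro ε hε
    obtain ⟨⟨h', hmem⟩, hnorm⟩ :=
      ContinuousMap.exists_mem_subalgebra_near_continuousMap_of_separatesPoints
        (Algebra.adjoin ℝ (Set.range (gen d))) sep g ε hε
    have hint := integral_eq_on_adjoin μ σ' h hmem
    have hb : ∀ ν : Measure (Sph d), ∀ _ : IsProbabilityMeasure ν,
        |(∫ u, g u ∂ν) - ∫ u, h' u ∂ν| ≤ ε := by
      intro ν hν
      haveI := hν
      rw [← integral_sub (cont_integrable' g.continuous ν) (cont_integrable' h'.continuous ν)]
      have hle : ∀ u : Sph d, ‖g u - h' u‖ ≤ ε := by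
        intro u
        have h1 : ‖(g - h') u‖ ≤ ‖g - h'‖ := ContinuousMap.norm_coe_le_norm (g - h') u
        have h2 : ‖g - h'‖ ≤ ε := by
          rw [← norm_neg, neg_sub]; exact hnorm.le
        calc ‖g u - h' u‖ = ‖(g - h') u‖ := by simp
        _ ≤ ε := h1.trans h2
      have := norm_integral_le_of_norm_le_const (μ := ν)
        (f := fun u => g u - h' u) (C := ε) (Filter.Eventually.of_forall hle)
      simpa using this
    have hμb := hb μ inferInstance
    have hσb := hb σ' inferInstance
    have : (∫ u, g u ∂μ) - ∫ u, g u ∂σ'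
        = ((∫ u, g u ∂μ) - ∫ u, h' u ∂μ) - ((∫ u, g u ∂σ') - ∫ u, h' u ∂σ') := by
      rw [hint]; ring
    rw [this]
    calc |((∫ u, g u ∂μ) - ∫ u, h' u ∂μ) - ((∫ u, g u ∂σ') - ∫ u, h' u ∂σ')|
        ≤ |(∫ u, g u ∂μ) - ∫ u, h' u ∂μ| + |(∫ u, g u ∂σ') - ∫ u, h' u ∂σ'| := abs_sub _ _
    _ ≤ 2 * ε := by linarith
  have habs : |(∫ u, g u ∂μ) - ∫ u, g u ∂σ'| ≤ 0 := by
    apply le_of_forall_pos_le_add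
    intro ε hε
    calc |(∫ u, g u ∂μ) - ∫ u, g u ∂σ'| ≤ 2 * (ε/2) := key (ε/2) (by linarith)
    _ = 0 + ε := by ring
  have := abs_nonpos_iff.mp habs
  linarith [this, abs_nonneg ((∫ u, g u ∂μ) - ∫ u, g u ∂σ')]

lemma measure_det
    (h : ∀ t, ∫ u, gen d t u ∂μ = ∫ u, gen d t u ∂σ') : μ = σ' := by
  apply ext_of_forall_lintegral_eq_of_IsFiniteMeasure
  intro f
  have hc : Continuous fun x : Sph d => (f x : ℝ) := NNReal.continuous_coe.comp f.continuous
  rw [lintegral_coe_eq_integral _ (cont_integrable' hc μ),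
    lintegral_coe_eq_integral _ (cont_integrable' hc σ')]
  exact congrArg ENNReal.ofReal (integral_eq_all μ σ' h ⟨fun x => (f x : ℝ), hc⟩)


section Glue
variable {d : ℕ} {γ : ℝ}

lemma pot_sigma_const [IsProbabilityMeasure (sigmaSph d)] (u w : Sph d) :
    pot d γ (sigmaSph d) u = pot d γ (sigmaSph d) w := by
  obtain ⟨e, he⟩ := exists_isometry w u
  have hemb : MeasurableEmbedding (⇑e) := e.toHomeomorph.measurableEmbedding
  calc pot d γ (sigmaSph d) u = ∫ v, gaussK d γ u v ∂(sigmaSph d) := rfl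
  _ = ∫ v, gaussK d γ u v ∂(Measure.map e (sigmaSph d)) := by rw [sigmaSph_isometry_map e]
  _ = ∫ v, gaussK d γ u (e v) ∂(sigmaSph d) := hemb.integral_map _
  _ = ∫ v, gaussK d γ w v ∂(sigmaSph d) := by
      congr 1; funext v
      rw [← he, gaussK_isometry]
  _ = pot d γ (sigmaSph d) w := rfl

lemma energy_sigma_eq_pot [IsProbabilityMeasure (sigmaSph d)] :
    energy (gaussK d γ) (sigmaSph d) = pot d γ (sigmaSph d) (pt d) := by
  rw [energy_eq_int_pot]
  calc ∫ u, pot d γ (sigmaSph d) u ∂(sigmaSph d)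
      = ∫ _u, pot d γ (sigmaSph d) (pt d) ∂(sigmaSph d) := by
        congr 1; funext u; exact pot_sigma_const u (pt d)
  _ = pot d γ (sigmaSph d) (pt d) := by simp

lemma cross_eq [IsProbabilityMeasure (sigmaSph d)]
    (μ : Measure (Sph d)) [IsProbabilityMeasure μ] :
    ∫ u, pot d γ (sigmaSph d) u ∂μ = energy (gaussK d γ) (sigmaSph d) := by
  calc ∫ u, pot d γ (sigmaSph d) u ∂μ
      = ∫ _u, pot d γ (sigmaSph d) (pt d) ∂μ := by
        congr 1; funext u; exact pot_sigma_const u (pt d)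
  _ = pot d γ (sigmaSph d) (pt d) := by simp
  _ = energy (gaussK d γ) (sigmaSph d) := energy_sigma_eq_pot.symm

lemma Fm_eq_exp (hγ : 0 < γ) (ν : Measure (Sph d)) (x : EuclideanSpace ℝ (Fin (d+1))) :
    Fm d γ ν x = rexp (-(2*γ) * (1 + ‖x‖^2)) *
      ∫ u, rexp ((4*γ) * ⟪(u : EuclideanSpace ℝ (Fin (d+1))), x⟫) ∂ν := by
  rw [Fm, ← integral_const_mul]
  congr 1; funext u
  rw [kfun, ← Real.exp_add]
  congr 1
  have hn : ‖(u : EuclideanSpace ℝ (Fin (d+1))) - x‖^2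
      = ‖(u : EuclideanSpace ℝ (Fin (d+1)))‖^2
        - 2 * ⟪(u : EuclideanSpace ℝ (Fin (d+1))), x⟫ + ‖x‖^2 := by
    rw [← real_inner_self_eq_norm_sq, ← real_inner_self_eq_norm_sq, ← real_inner_self_eq_norm_sq]
    rw [inner_sub_sub_self, real_inner_comm ((u : EuclideanSpace ℝ (Fin (d+1)))) x]
    ring
  rw [hn, norm_coe']
  ring

lemma exp_int_eq (hγ : 0 < γ) (μ : Measure (Sph d)) [IsProbabilityMeasure μ]
    [IsProbabilityMeasure (sigmaSph d)]
    (hF : ∀ x, Fm d γ μ x = Fm d γ (sigmaSph d) x) (t : EuclideanSpace ℝ (Fin (d+1))) :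
    ∫ u, gen d t u ∂μ = ∫ u, gen d t u ∂(sigmaSph d) := by
  have h4 : (4*γ) ≠ 0 := by positivity
  set x : EuclideanSpace ℝ (Fin (d+1)) := (4*γ)⁻¹ • t with hxdef
  have hx : ∀ u : Sph d,
      (4*γ) * ⟪(u : EuclideanSpace ℝ (Fin (d+1))), x⟫ = ⟪(u : EuclideanSpace ℝ (Fin (d+1))), t⟫ := by
    intro u
    rw [hxdef, real_inner_smul_right]
    field_simp
  have hkey := hF x
  rw [Fm_eq_exp hγ μ x, Fm_eq_exp hγ (sigmaSph d) x] at hkey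
  have hcancel := mul_left_cancel₀ (Real.exp_ne_zero _) hkey
  have hrw : ∀ ν : Measure (Sph d),
      ∫ u, rexp ((4*γ) * ⟪(u : EuclideanSpace ℝ (Fin (d+1))), x⟫) ∂ν
        = ∫ u, gen d t u ∂ν := by
    intro ν
    congr 1; funext u
    rw [gen_apply, hx u]
  rw [hrw μ, hrw (sigmaSph d)] at hcancel
  exact hcancel

end Glue

end SphAux

open SphAux in
/-- For every `γ > 0`, the uniform measure `σ_d` is the *unique* minimizer of
the Gaussian energy among Borel probability measures on `S^d` (`d ≥ 1`): if a Borel probability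
measure `μ` satisfies `I_{G_γ}[μ] ≤ I_{G_γ}[σ_d]`, then `μ = σ_d`. -/
theorem sigma_unique_minimizer_gaussian (d : ℕ) (hd : 1 ≤ d) (γ : ℝ) (hγ : 0 < γ)
    (μ : Measure (Sph d)) [IsProbabilityMeasure μ]
    (hmin : energy (gaussK d γ) μ ≤ energy (gaussK d γ) (sigmaSph d)) :
    μ = sigmaSph d := by
  classical
  by_cases hzero : (μH[(d : ℝ)] : Measure (Sph d)) Set.univ = 0
  · exfalso
    have hμH : (μH[(d : ℝ)] : Measure (Sph d)) = 0 := Measure.measure_univ_eq_zero.mp hzero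
    have hs : sigmaSph d = 0 := by rw [sigmaSph, hμH]; simp
    rw [hs] at hmin
    have h0 : energy (gaussK d γ) (0 : Measure (Sph d)) = 0 := by
      rw [energy]; simp
    rw [h0] at hmin
    exact absurd hmin (not_le.mpr (energy_pos hγ μ))
  by_cases htop : (μH[(d : ℝ)] : Measure (Sph d)) Set.univ = ⊤
  · exfalso
    have hs : sigmaSph d = 0 := by rw [sigmaSph, htop]; simp
    rw [hs] at hmin
    have h0 : energy (gaussK d γ) (0 : Measure (Sph d)) = 0 := by
      rw [energy]; simp
    rw [h0] at hmin
    exact absurd hmin (not_le.mpr (energy_pos hγ μ))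
  -- main case
  haveI hσ : IsProbabilityMeasure (sigmaSph d) := by
    constructor
    rw [sigmaSph]
    simp only [Measure.smul_apply, smul_eq_mul]
    exact ENNReal.inv_mul_cancel hzero htop
  set σ : Measure (Sph d) := sigmaSph d with hσdef
  -- energies
  have e1 : ∫ x, Fm d γ μ x * Fm d γ μ x = Cg d γ * energy (gaussK d γ) μ := claim2 μ μ hγ
  have e2 : ∫ x, Fm d γ μ x * Fm d γ σ x = Cg d γ * energy (gaussK d γ) σ := by
    rw [claim2 μ σ hγ]
    congr 1
    exact cross_eq μ
  have e3 : ∫ x, Fm d γ σ x * Fm d γ σ x = Cg d γ * energy (gaussK d γ) σ := claim2 σ σ hγ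
  -- the quadratic form
  have hfun : (fun x => (Fm d γ μ x - Fm d γ σ x)^2)
      = fun x => Fm d γ μ x * Fm d γ μ x - 2 * (Fm d γ μ x * Fm d γ σ x)
        + Fm d γ σ x * Fm d γ σ x := by
    funext x; ring
  have hsq_int : Integrable (fun x => (Fm d γ μ x - Fm d γ σ x)^2) := by
    rw [hfun]
    exact ((Fm_mul_integrable μ μ hγ).sub ((Fm_mul_integrable μ σ hγ).const_mul 2)).add
      (Fm_mul_integrable σ σ hγ)
  have hsq : ∫ x, (Fm d γ μ x - Fm d γ σ x)^2
      = Cg d γ * (energy (gaussK d γ) μ - energy (gaussK d γ) σ) := by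
    have hA := (Fm_mul_integrable μ μ hγ).sub ((Fm_mul_integrable μ σ hγ).const_mul 2)
    have hB := Fm_mul_integrable σ σ hγ
    have h1 : ∫ x, (Fm d γ μ x * Fm d γ μ x - 2 * (Fm d γ μ x * Fm d γ σ x)
          + Fm d γ σ x * Fm d γ σ x)
        = (∫ x, (Fm d γ μ x * Fm d γ μ x - 2 * (Fm d γ μ x * Fm d γ σ x)))
          + ∫ x, Fm d γ σ x * Fm d γ σ x := integral_add hA hB
    have h2 : ∫ x, (Fm d γ μ x * Fm d γ μ x - 2 * (Fm d γ μ x * Fm d γ σ x))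
        = (∫ x, Fm d γ μ x * Fm d γ μ x) - ∫ x, 2 * (Fm d γ μ x * Fm d γ σ x) :=
      integral_sub (Fm_mul_integrable μ μ hγ) ((Fm_mul_integrable μ σ hγ).const_mul 2)
    have h3 : ∫ x, 2 * (Fm d γ μ x * Fm d γ σ x) = 2 * ∫ x, Fm d γ μ x * Fm d γ σ x :=
      integral_const_mul _ _
    rw [hfun, h1, h2, h3, e1, e2, e3]
    ring
  have hge : 0 ≤ ∫ x, (Fm d γ μ x - Fm d γ σ x)^2 :=
    integral_nonneg fun x => sq_nonneg _
  have hle : ∫ x, (Fm d γ μ x - Fm d γ σ x)^2 ≤ 0 := by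
    rw [hsq]
    apply mul_nonpos_of_nonneg_of_nonpos (Cg_pos hγ).le
    linarith
  have heq0 : ∫ x, (Fm d γ μ x - Fm d γ σ x)^2 = 0 := le_antisymm hle hge
  have hae : (fun x => (Fm d γ μ x - Fm d γ σ x)^2) =ᵐ[volume] 0 :=
    (integral_eq_zero_iff_of_nonneg (fun x => sq_nonneg _) hsq_int).mp heq0
  have hc : Continuous fun x => (Fm d γ μ x - Fm d γ σ x)^2 :=
    ((Fm_cont μ hγ).sub (Fm_cont σ hγ)).pow 2
  have hall : (fun x => (Fm d γ μ x - Fm d γ σ x)^2) = 0 :=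
    (Continuous.ae_eq_iff_eq volume hc continuous_zero).mp hae
  have hF : ∀ x, Fm d γ μ x = Fm d γ σ x := by
    intro x
    have := congrFun hall x
    simp only [Pi.zero_apply] at this
    have h2 := (pow_eq_zero_iff two_ne_zero).mp this
    linarith [sub_eq_zero.mp h2]
  exact measure_det μ σ (exp_int_eq hγ μ hF)

end
end

section
/- For any γ > 0, any integer n ≥ 1, any integer N ≥ 1, any pairwise distinct points x₁, …, x_N ∈ ℝⁿ, and any real numbers c₁, …, c_N not all zero, one has ∑_{i=1}^N ∑_{j=1}^N c_i c_j exp(−γ‖x_i − x_j‖₂²) > 0; that is, the Gaussian kernel (x, y) ↦ exp(−γ‖x − y‖₂²) is strictly positive definite on ℝⁿ × ℝⁿ in the pointwise sense. -/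
open Finset

private lemma aux_sum3_comm {α β δ : Type*} [Fintype α] [Fintype β] [Fintype δ]
    (A : α → β → δ → ℝ) :
    ∑ i, ∑ j, ∑ f, A i j f = ∑ f, ∑ i, ∑ j, A i j f := by
  calc ∑ i, ∑ j, ∑ f, A i j f = ∑ i, ∑ f, ∑ j, A i j f :=
        Finset.sum_congr rfl fun i _ => Finset.sum_comm
    _ = ∑ f, ∑ i, ∑ j, A i j f := Finset.sum_comm

private lemma aux_monomial {n : ℕ} (g : EuclideanSpace ℝ (Fin n) → ℝ)
    (hg : g ∈ Submonoid.closure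
      (Set.range (fun m : Fin n => fun y : EuclideanSpace ℝ (Fin n) => y m))) :
    ∃ (k : ℕ) (f : Fin k → Fin n), g = fun y => ∏ l, y (f l) := by
  induction hg using Submonoid.closure_induction with
  | mem a ha => obtain ⟨m, rfl⟩ := ha; exact ⟨1, fun _ => m, by funext y; simp⟩
  | one => exact ⟨0, Fin.elim0, by funext y; simp⟩
  | mul a b ha hb iha ihb =>
    obtain ⟨k1, f1, rfl⟩ := iha; obtain ⟨k2, f2, rfl⟩ := ihb
    refine ⟨k1 + k2, Fin.append f1 f2, ?_⟩
    funext y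
    rw [Pi.mul_apply, Fin.prod_univ_add]
    have h1 : ∀ i : Fin k1, y (Fin.append f1 f2 (Fin.castAdd k2 i)) = y (f1 i) := by
      intro i; rw [Fin.append_left]
    have h2 : ∀ i : Fin k2, y (Fin.append f1 f2 (Fin.natAdd k1 i)) = y (f2 i) := by
      intro i; rw [Fin.append_right]
    rw [Finset.prod_congr rfl fun i _ => h1 i, Finset.prod_congr rfl fun i _ => h2 i]


/-- For any `γ > 0`, any `n ≥ 1`, any `N ≥ 1`, any pairwise distinct points
`x₁, …, x_N ∈ ℝⁿ`, and any real numbers `c₁, …, c_N` not all zero,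
`∑_{i,j} c_i c_j exp(−γ‖x_i − x_j‖₂²) > 0`: the Gaussian kernel is strictly positive definite
on `ℝⁿ × ℝⁿ` in the pointwise sense. -/
theorem gaussian_kernel_strictly_posdef_points (γ : ℝ) (hγ : 0 < γ)
    (n : ℕ) (hn : 1 ≤ n) (N : ℕ) (hN : 1 ≤ N)
    (x : Fin N → EuclideanSpace ℝ (Fin n)) (hx : Function.Injective x)
    (c : Fin N → ℝ) (hc : c ≠ 0) :
    0 < ∑ i : Fin N, ∑ j : Fin N, c i * c j * Real.exp (-γ * ‖x i - x j‖ ^ 2) := by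
  classical
  set ip : Fin N → Fin N → ℝ := fun i j => inner ℝ (x i) (x j) with hip_def
  have hip : ∀ i j, ip i j = ∑ m, x i m * x j m := by
    intro i j
    simp [ip, PiLp.inner_apply, RCLike.inner_apply, conj_trivial, mul_comm]
  set b : Fin N → ℝ := fun i => c i * Real.exp (-γ * ‖x i‖ ^ 2) with hb_def
  have hbne : b ≠ 0 := by
    intro h
    apply hc
    funext i
    have h1 := congrFun h i
    simp only [hb_def, Pi.zero_apply, mul_eq_zero] at h1
    rcases h1 with h1 | h1
    · exact h1
    · exact absurd h1 (Real.exp_ne_zero _)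
  set T : ∀ k : ℕ, (Fin k → Fin n) → ℝ := fun k f => ∑ i, b i * ∏ l, x i (f l) with hT_def
  set g : ℕ → ℝ := fun k => ∑ i, ∑ j, b i * b j * ((2 * γ * ip i j) ^ k / (Nat.factorial k)) with hg_def
  have hsum_pt : ∀ i j : Fin N,
      Summable (fun k : ℕ => b i * b j * ((2 * γ * ip i j) ^ k / (Nat.factorial k))) :=
    fun i j => (Real.summable_pow_div_factorial _).mul_left _
  have hgsummable : Summable g := by
    apply summable_sum
    intro i _
    exact summable_sum fun j _ => hsum_pt i j
  have hexp : ∀ t : ℝ, Real.exp t = ∑' k : ℕ, t ^ k / (Nat.factorial k) := by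
    intro t
    rw [Real.exp_eq_exp_ℝ, NormedSpace.exp_eq_tsum_div]
  have hterm : ∀ i j, c i * c j * Real.exp (-γ * ‖x i - x j‖ ^ 2)
      = b i * b j * Real.exp (2 * γ * ip i j) := by
    intro i j
    have hnorm : -γ * ‖x i - x j‖ ^ 2
        = -γ * ‖x i‖ ^ 2 + -γ * ‖x j‖ ^ 2 + 2 * γ * ip i j := by
      simp only [hip_def]
      rw [norm_sub_sq_real]
      ring
    rw [hb_def]
    dsimp only
    rw [hnorm, Real.exp_add, Real.exp_add]
    ring
  have hS : ∑ i : Fin N, ∑ j : Fin N, c i * c j * Real.exp (-γ * ‖x i - x j‖ ^ 2)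
      = ∑' k, g k := by
    rw [Summable.tsum_finsetSum fun i _ => summable_sum fun j _ => hsum_pt i j]
    refine Finset.sum_congr rfl fun i _ => ?_
    rw [Summable.tsum_finsetSum fun j _ => hsum_pt i j]
    refine Finset.sum_congr rfl fun j _ => ?_
    rw [hterm i j, hexp, ← tsum_mul_left]
  have hpowk : ∀ (k : ℕ) (i j : Fin N),
      ip i j ^ k = ∑ f : Fin k → Fin n, ∏ l, x i (f l) * x j (f l) := by
    intro k i j
    rw [hip i j, Fintype.sum_pow]
  have hg_eq : ∀ k, g k = (2 * γ) ^ k / (Nat.factorial k) * ∑ f : Fin k → Fin n, T k f ^ 2 := by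
    intro k
    rw [hg_def]
    dsimp only
    calc (∑ i, ∑ j, b i * b j * ((2 * γ * ip i j) ^ k / (Nat.factorial k)))
        = ∑ i, ∑ j, ∑ f : Fin k → Fin n,
            (2 * γ) ^ k / (Nat.factorial k) * ((b i * ∏ l, x i (f l)) * (b j * ∏ l, x j (f l))) := by
          refine Finset.sum_congr rfl fun i _ => Finset.sum_congr rfl fun j _ => ?_
          rw [mul_pow, hpowk, Finset.mul_sum, Finset.sum_div, Finset.mul_sum]
          refine Finset.sum_congr rfl fun f _ => ?_
          rw [Finset.prod_mul_distrib]
          ring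
      _ = ∑ f : Fin k → Fin n, ∑ i, ∑ j,
            (2 * γ) ^ k / (Nat.factorial k) * ((b i * ∏ l, x i (f l)) * (b j * ∏ l, x j (f l))) :=
          aux_sum3_comm _
      _ = (2 * γ) ^ k / (Nat.factorial k) * ∑ f : Fin k → Fin n, T k f ^ 2 := by
          rw [Finset.mul_sum]
          refine Finset.sum_congr rfl fun f _ => ?_
          rw [hT_def]
          dsimp only
          rw [sq, Finset.sum_mul_sum]
          simp only [Finset.mul_sum]
  have hgnonneg : ∀ k, 0 ≤ g k := by
    intro k
    rw [hg_eq]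
    exact mul_nonneg (by positivity) (Finset.sum_nonneg fun f _ => sq_nonneg _)
  have hexists : ∃ k, 0 < g k := by
    by_contra hcon
    push_neg at hcon
    have hg0 : ∀ k, g k = 0 := fun k => le_antisymm (hcon k) (hgnonneg k)
    have hT0 : ∀ (k : ℕ) (f : Fin k → Fin n), T k f = 0 := by
      intro k f
      have h1 : ∑ f : Fin k → Fin n, T k f ^ 2 = 0 := by
        have h2 := hg0 k
        rw [hg_eq] at h2
        have hpos : (0:ℝ) < (2 * γ) ^ k / (Nat.factorial k) := by positivity
        exact (mul_eq_zero.mp h2).resolve_left (ne_of_gt hpos)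
      have h3 := (Finset.sum_eq_zero_iff_of_nonneg
        (fun f _ => sq_nonneg (T k f))).mp h1 f (Finset.mem_univ f)
      exact pow_eq_zero_iff two_ne_zero |>.mp h3
    apply hbne
    funext i0
    show b i0 = 0
    set S : Set (EuclideanSpace ℝ (Fin n) → ℝ) :=
      Set.range (fun m : Fin n => fun y : EuclideanSpace ℝ (Fin n) => y m) with hS_def
    have hL : ∀ q ∈ Algebra.adjoin ℝ S, ∑ i, b i * q (x i) = 0 := by
      intro q hq
      have hq' : q ∈ Submodule.span ℝ ((Submonoid.closure S : Submonoid _) : Set _) := by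
        rw [← Algebra.adjoin_eq_span]
        exact hq
      clear hq
      induction hq' using Submodule.span_induction with
      | mem u hu =>
        obtain ⟨k, f, rfl⟩ := aux_monomial u hu
        exact hT0 k f
      | zero => simp
      | add u v hu' hv' hu hv =>
        simp only [Pi.add_apply, mul_add, Finset.sum_add_distrib, hu, hv, add_zero]
      | smul a u hu' hu =>
        simp only [Pi.smul_apply, smul_eq_mul, mul_left_comm, ← Finset.mul_sum]
        rw [hu, mul_zero]
    set q : EuclideanSpace ℝ (Fin n) → ℝ :=
      ∏ j ∈ Finset.univ.erase i0,
        ((fun y => (inner ℝ (x i0 - x j) y : ℝ)) -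
          (fun _ => (inner ℝ (x i0 - x j) (x j) : ℝ))) with hq_def
    have hqmem : q ∈ Algebra.adjoin ℝ S := by
      rw [hq_def]
      apply Subalgebra.prod_mem
      intro j _
      apply Subalgebra.sub_mem
      · have heq : (fun y : EuclideanSpace ℝ (Fin n) => (inner ℝ (x i0 - x j) y : ℝ))
            = ∑ m : Fin n, (x i0 - x j) m •
                (fun y : EuclideanSpace ℝ (Fin n) => y m) := by
          funext y
          simp [PiLp.inner_apply, RCLike.inner_apply, conj_trivial, mul_comm]
        rw [heq]
        exact Subalgebra.sum_mem _ fun m _ =>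
          Subalgebra.smul_mem _ (Algebra.subset_adjoin (show (fun y : EuclideanSpace ℝ (Fin n) => y m) ∈ S from ⟨m, rfl⟩)) _
      · exact Subalgebra.algebraMap_mem (Algebra.adjoin ℝ S) (inner ℝ (x i0 - x j) (x j) : ℝ)
    have hqval : ∀ i, q (x i) = ∏ j ∈ Finset.univ.erase i0,
        ((inner ℝ (x i0 - x j) (x i) : ℝ) - (inner ℝ (x i0 - x j) (x j) : ℝ)) := by
      intro i
      rw [hq_def, Finset.prod_apply]
      rfl
    have hq0 : ∀ i, i ≠ i0 → q (x i) = 0 := by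
      intro i hi
      rw [hqval]
      exact Finset.prod_eq_zero (i := i) (Finset.mem_erase.mpr ⟨hi, Finset.mem_univ i⟩)
        (sub_self _)
    have hqpos : 0 < q (x i0) := by
      rw [hqval]
      apply Finset.prod_pos
      intro j hj
      have hj' : j ≠ i0 := (Finset.mem_erase.mp hj).1
      have h1 : (inner ℝ (x i0 - x j) (x i0) : ℝ) - (inner ℝ (x i0 - x j) (x j) : ℝ)
          = ‖x i0 - x j‖ ^ 2 := by
        rw [← inner_sub_right, real_inner_self_eq_norm_sq]
      rw [h1]
      have hne : x i0 - x j ≠ 0 := sub_ne_zero.mpr fun h => hj' (hx h).symm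
      exact pow_pos (norm_pos_iff.mpr hne) 2
    have hsum := hL q hqmem
    rw [Finset.sum_eq_single i0 (fun i _ hi => by rw [hq0 i hi, mul_zero])
      (fun h => absurd (Finset.mem_univ i0) h)] at hsum
    exact (mul_eq_zero.mp hsum).resolve_right (ne_of_gt hqpos)
  obtain ⟨k0, hk0⟩ := hexists
  rw [hS]
  exact Summable.tsum_pos hgsummable hgnonneg k0 hk0
end

section
/- Let p : ℝ → [0, ∞) be a measurable probability density with respect to Lebesgue measure (∫ p(x) dx = 1) with finite mean μ = ∫ x p(x) dx and finite variance σ² = ∫ (x − μ)² p(x) dx > 0, and assume that x ↦ p(x) log p(x) is Lebesgue-integrable. Then its differential entropy satisfies −∫ p(x) log p(x) dx ≤ (1/2) log(2π) + 1/2 + log σ, i.e., the differential entropy of any distribution with mean μ and variance σ² is at most that of the Gaussian distribution N(μ, σ²). -/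
open MeasureTheory

/-- Let `p : ℝ → [0,∞)` be a measurable probability density with respect to
Lebesgue measure, with finite mean `m = ∫ x p(x) dx` and finite variance
`v = ∫ (x − m)² p(x) dx > 0`, and assume `x ↦ p(x) log p(x)` is Lebesgue-integrable. Then the
differential entropy of `p` satisfies
`−∫ p(x) log p(x) dx ≤ (1/2) log(2π) + 1/2 + log σ` where `σ = √v`; i.e. it is at most the
differential entropy of the Gaussian with the same mean and variance. -/
theorem differential_entropy_le_gaussian (p : ℝ → ℝ)
    (hp_meas : Measurable p) (hp_nonneg : ∀ x, 0 ≤ p x)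
    (hp_int : Integrable p) (hp_mass : ∫ x, p x = 1)
    (m : ℝ) (hmean_int : Integrable (fun x => x * p x)) (hmean : ∫ x, x * p x = m)
    (v : ℝ) (hvar_int : Integrable (fun x => (x - m) ^ 2 * p x))
    (hvar : ∫ x, (x - m) ^ 2 * p x = v) (hv_pos : 0 < v)
    (hent_int : Integrable (fun x => p x * Real.log (p x))) :
    -∫ x, p x * Real.log (p x)
      ≤ (1 / 2) * Real.log (2 * Real.pi) + 1 / 2 + Real.log (Real.sqrt v) := by
  have hπ : (0:ℝ) < Real.pi := Real.pi_pos
  have h2πv : (0:ℝ) < 2 * Real.pi * v := by positivity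
  set c : ℝ := Real.sqrt (2 * Real.pi * v) with hc
  have hc_pos : 0 < c := Real.sqrt_pos.mpr h2πv
  set φ : ℝ → ℝ := fun x => c⁻¹ * Real.exp (-(1 / (2 * v)) * (x - m) ^ 2) with hφ
  have hφpos : ∀ x, 0 < φ x := fun x => by positivity
  -- integrability of the Gaussian
  have hb : (0:ℝ) < 1 / (2 * v) := by positivity
  have hexp_int : Integrable (fun x : ℝ => Real.exp (-(1 / (2 * v)) * x ^ 2)) :=
    integrable_exp_neg_mul_sq hb
  have hφInt : Integrable φ := (hexp_int.comp_sub_right m).const_mul _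
  -- integral of the Gaussian is 1
  have hφint : ∫ x, φ x = 1 := by
    have h1 : ∫ x : ℝ, Real.exp (-(1 / (2 * v)) * x ^ 2)
        = Real.sqrt (Real.pi / (1 / (2 * v))) := integral_gaussian _
    have h2 : ∫ x : ℝ, Real.exp (-(1 / (2 * v)) * (x - m) ^ 2)
        = Real.sqrt (Real.pi / (1 / (2 * v))) := by
      rw [← h1]
      exact integral_sub_right_eq_self (fun x => Real.exp (-(1 / (2 * v)) * x ^ 2)) m
    have h3 : Real.pi / (1 / (2 * v)) = 2 * Real.pi * v := by
      field_simp
    rw [hφ]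
    simp only [integral_const_mul, h2, h3, ← hc]
    exact inv_mul_cancel₀ (ne_of_gt hc_pos)
  -- log of the Gaussian density
  have hlogφ : ∀ x, Real.log (φ x) = -Real.log c - (1 / (2 * v)) * (x - m) ^ 2 := by
    intro x
    rw [hφ]
    rw [Real.log_mul (inv_ne_zero (ne_of_gt hc_pos)) (Real.exp_ne_zero _),
      Real.log_inv, Real.log_exp]
    ring
  -- integrability of p * log φ
  have hplogφ_int : Integrable (fun x => p x * Real.log (φ x)) := by
    have : (fun x => p x * Real.log (φ x))
        = fun x => (-Real.log c) * p x + (-(1 / (2 * v))) * ((x - m) ^ 2 * p x) := by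
      funext x; rw [hlogφ x]; ring
    rw [this]
    exact (hp_int.const_mul _).add (hvar_int.const_mul _)
  -- value of ∫ p log φ
  have hplogφ : ∫ x, p x * Real.log (φ x) = -Real.log c - 1 / 2 := by
    have heq : (fun x => p x * Real.log (φ x))
        = fun x => (-Real.log c) * p x + (-(1 / (2 * v))) * ((x - m) ^ 2 * p x) := by
      funext x; rw [hlogφ x]; ring
    rw [heq, integral_add (hp_int.const_mul _) (hvar_int.const_mul _),
      integral_const_mul, integral_const_mul, hp_mass, hvar]
    field_simp
    ring
  -- Gibbs inequality pointwise
  have hpt : ∀ x, p x * Real.log (φ x) - p x * Real.log (p x) ≤ φ x - p x := by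
    intro x
    rcases eq_or_lt_of_le (hp_nonneg x) with h | h
    · rw [← h]; simp [le_of_lt (hφpos x)]
    · have hdiv : 0 < φ x / p x := div_pos (hφpos x) h
      have hlog : Real.log (φ x / p x) ≤ φ x / p x - 1 :=
        Real.log_le_sub_one_of_pos hdiv
      have := mul_le_mul_of_nonneg_left hlog (le_of_lt h)
      rw [Real.log_div (ne_of_gt (hφpos x)) (ne_of_gt h)] at this
      calc p x * Real.log (φ x) - p x * Real.log (p x)
          = p x * (Real.log (φ x) - Real.log (p x)) := by ring
        _ ≤ p x * (φ x / p x - 1) := this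
        _ = φ x - p x := by field_simp
  -- integrate Gibbs inequality
  have hInt_f : Integrable (fun x => p x * Real.log (φ x) - p x * Real.log (p x)) :=
    hplogφ_int.sub hent_int
  have hmono : ∫ x, (p x * Real.log (φ x) - p x * Real.log (p x))
      ≤ ∫ x, (φ x - p x) := integral_mono hInt_f (hφInt.sub hp_int) hpt
  rw [integral_sub hplogφ_int hent_int, integral_sub hφInt hp_int, hφint, hp_mass,
    hplogφ] at hmono
  -- rearrange
  have hmain : -∫ x, p x * Real.log (p x) ≤ Real.log c + 1 / 2 := by linarith
  have hlogc : Real.log c = (1 / 2) * Real.log (2 * Real.pi) + (1 / 2) * Real.log v := by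
    rw [hc, Real.log_sqrt (le_of_lt h2πv),
      Real.log_mul (ne_of_gt (by positivity)) (ne_of_gt hv_pos)]
    ring
  have hlogv : Real.log (Real.sqrt v) = (1 / 2) * Real.log v :=
    by rw [Real.log_sqrt (le_of_lt hv_pos)]; ring
  rw [hlogv]
  linarith [hmain, hlogc.le, hlogc.ge]
end

section
/- Let X be a standard Borel space and let ρ be a Borel probability measure on X × ℝ with first marginal ρ_X. Let (ρ_x)_{x ∈ X} be the disintegration of ρ with respect to its first coordinate (the conditional distribution of the second coordinate given the first), and let F_{ρ,x}(y) = ρ_x((−∞, y]) denote the conditional cumulative distribution function. If ρ_x is atomless for ρ_X-almost every x, then the pushforward of ρ under the map (x, y) ↦ (x, F_{ρ,x}(y)) equals the product measure ρ_X ⊗ Uniform([0, 1]); in particular, under ρ the random variable F_{ρ,x}(y) is uniformly distributed on [0, 1] and independent of x. (This is the recursive step of the Darmois construction.) -/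
open MeasureTheory ProbabilityTheory

open Set Filter Topology in
lemma map_cdf_atomless (μ : Measure ℝ) [IsProbabilityMeasure μ] (h : ∀ y : ℝ, μ {y} = 0) :
    μ.map (fun y => (μ (Set.Iic y)).toReal) = volume.restrict (Set.Icc (0 : ℝ) 1) := by
  have hfe : (fun y => (μ (Set.Iic y)).toReal) = ⇑(cdf μ) := by
    funext y; rw [cdf_eq_real, measureReal_def]
  rw [hfe]
  set f := cdf μ with hfdef
  have hcont : Continuous ⇑f := by
    rw [continuous_iff_continuousAt]
    intro x
    rw [f.mono.continuousAt_iff_leftLim_eq_rightLim]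
    have h1 : f.measure {x} = 0 := by rw [hfdef, measure_cdf]; exact h x
    rw [StieltjesFunction.measure_singleton] at h1
    rw [ENNReal.ofReal_eq_zero, sub_nonpos] at h1
    rw [f.rightLim_eq]
    exact le_antisymm (f.mono.leftLim_le le_rfl) h1
  have hle1 : ∀ y, f y ≤ 1 := cdf_le_one μ
  have hge0 : ∀ y, 0 ≤ f y := cdf_nonneg μ
  have hIic : ∀ y, μ (Iic y) = ENNReal.ofReal (f y) := fun y => (ofReal_cdf μ y).symm
  refine Measure.ext_of_Iic _ _ (fun t => ?_)
  rw [Measure.map_apply hcont.measurable measurableSet_Iic,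
    Measure.restrict_apply measurableSet_Iic]
  have hRHS : Iic t ∩ Icc (0:ℝ) 1 = Icc 0 (min t 1) := by
    ext z
    simp only [Set.mem_inter_iff, Set.mem_Iic, Set.mem_Icc, le_min_iff]
    tauto
  rw [hRHS]
  rcases le_or_gt 1 t with ht1 | ht1
  · have huniv : ⇑f ⁻¹' Iic t = univ := by
      ext y; simpa using le_trans (hle1 y) ht1
    rw [huniv, min_eq_right ht1]
    simp [Real.volume_Icc]
  rcases lt_or_ge t 0 with ht0 | ht0
  · have hempty : ⇑f ⁻¹' Iic t = ∅ := by
      ext y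
      simp only [mem_preimage, mem_Iic, mem_empty_iff_false, iff_false, not_le]
      exact lt_of_lt_of_le ht0 (hge0 y)
    rw [hempty, min_eq_left ht1.le]
    simp [Real.volume_Icc, ht0.le]
  · rw [min_eq_left ht1.le, Real.volume_Icc, sub_zero]
    set A : Set ℝ := ⇑f ⁻¹' Iic t with hA
    rcases A.eq_empty_or_nonempty with hAe | hAne
    · have ht00 : t ≤ 0 := by
        by_contra h'
        push_neg at h'
        obtain ⟨y, hy⟩ := ((tendsto_cdf_atBot μ).eventually (eventually_lt_nhds h')).exists
        exact (Set.eq_empty_iff_forall_notMem.mp hAe y) hy.le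
      rw [hAe]
      simp [ENNReal.ofReal_eq_zero, ht00]
    · have hAclosed : IsClosed A := IsClosed.preimage hcont isClosed_Iic
      obtain ⟨z, hz⟩ :=
        ((tendsto_cdf_atTop μ).eventually (eventually_gt_nhds ht1)).exists
      have hAbdd : BddAbove A := by
        refine ⟨z, fun y hy => ?_⟩
        by_contra hyz
        push_neg at hyz
        exact absurd (le_trans (f.mono hyz.le) hy) (not_le.mpr hz)
      have hs_mem : sSup A ∈ A := hAclosed.csSup_mem hAne hAbdd
      have hAeq : A = Iic (sSup A) := by
        apply subset_antisymm (fun y hy => le_csSup hAbdd hy)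
        intro y hy
        exact le_trans (f.mono hy) hs_mem
      have hfs : f (sSup A) = t := by
        refine le_antisymm hs_mem ?_
        have hev : ∀ᶠ y in 𝓝[>] (sSup A), t ≤ f y := by
          filter_upwards [self_mem_nhdsWithin] with y hy
          by_contra hty
          push_neg at hty
          exact absurd (le_csSup hAbdd hty.le) (not_le.mpr hy)
        exact ge_of_tendsto
          ((hcont.continuousAt).tendsto.mono_left nhdsWithin_le_nhds) hev
      rw [hAeq, hIic, hfs]

/-- Let `X` be a standard Borel space and `ρ` a Borel probability measure on
`X × ℝ` with first marginal `ρ_X`. Let `(ρ_x)_{x ∈ X}`, given by a Markov kernel `κ` with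
`ρ_X ⊗ κ = ρ`, be the disintegration of `ρ` with respect to its first coordinate, and let
`F_{ρ,x}(y) = ρ_x((−∞, y])` be the conditional cumulative distribution function. If `ρ_x` is
atomless for `ρ_X`-almost every `x`, then the pushforward of `ρ` under
`(x, y) ↦ (x, F_{ρ,x}(y))` equals the product measure `ρ_X ⊗ Uniform([0,1])`; in particular,
under `ρ` the value `F_{ρ,x}(y)` is uniform on `[0,1]` and independent of `x` (recursive step
of the Darmois construction). -/
theorem conditional_cdf_pushforward_product {X : Type*} [MeasurableSpace X]
    [StandardBorelSpace X]
    (ρ : Measure (X × ℝ)) [IsProbabilityMeasure ρ]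
    (κ : Kernel X ℝ) [IsMarkovKernel κ]
    (hκ : ρ.fst ⊗ₘ κ = ρ)
    (h_atomless : ∀ᵐ x ∂ρ.fst, ∀ y : ℝ, κ x {y} = 0) :
    ρ.map (fun q : X × ℝ => (q.1, (κ q.1 (Set.Iic q.2)).toReal))
      = ρ.fst.prod (volume.restrict (Set.Icc (0 : ℝ) 1)) := by
  set g : X × ℝ → ℝ := fun q => (κ q.1 (Set.Iic q.2)).toReal with hg
  have hgmeas : Measurable g := by
    have ht : MeasurableSet {p : (X × ℝ) × ℝ | p.2 ≤ p.1.2} :=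
      measurableSet_le measurable_snd measurable_fst.snd
    have h1 : Measurable (fun a : X × ℝ =>
        (Kernel.comap κ (Prod.fst : X × ℝ → X) measurable_fst) a
          (Prod.mk a ⁻¹' {p : (X × ℝ) × ℝ | p.2 ≤ p.1.2})) :=
      Kernel.measurable_kernel_prodMk_left ht
    have h3 : Measurable (fun q : X × ℝ => κ q.1 (Set.Iic q.2)) := h1
    exact h3.ennreal_toReal
  have hfmeas : Measurable (fun q : X × ℝ => (q.1, g q)) :=
    measurable_fst.prodMk hgmeas
  have hgx_meas : ∀ x : X, Measurable (fun y => (κ x (Set.Iic y)).toReal) := by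
    intro x
    refine Monotone.measurable (fun y₁ y₂ hy => ?_)
    exact ENNReal.toReal_mono (measure_ne_top _ _) (measure_mono (Set.Iic_subset_Iic.mpr hy))
  have key : ∀ᵐ x ∂ρ.fst,
      (κ x).map (fun y => (κ x (Set.Iic y)).toReal)
        = volume.restrict (Set.Icc (0 : ℝ) 1) := by
    filter_upwards [h_atomless] with x hx
    exact map_cdf_atomless (κ x) hx
  refine (Measure.prod_eq fun s t hs ht => ?_).symm
  have hpre : MeasurableSet ((fun q : X × ℝ => (q.1, g q)) ⁻¹' (s ×ˢ t)) :=
    hfmeas (hs.prod ht)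
  rw [Measure.map_apply hfmeas (hs.prod ht)]
  nth_rewrite 1 [← hκ]
  rw [Measure.compProd_apply hpre]
  have hint : ∀ᵐ x ∂ρ.fst,
      κ x (Prod.mk x ⁻¹' ((fun q : X × ℝ => (q.1, g q)) ⁻¹' (s ×ˢ t)))
        = s.indicator (fun _ => volume.restrict (Set.Icc (0 : ℝ) 1) t) x := by
    filter_upwards [key] with x hx
    by_cases hxs : x ∈ s
    · have hset : Prod.mk x ⁻¹' ((fun q : X × ℝ => (q.1, g q)) ⁻¹' (s ×ˢ t))
          = (fun y => (κ x (Set.Iic y)).toReal) ⁻¹' t := by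
        ext y
        simp [hg, Set.mem_preimage, hxs]
      rw [hset, Set.indicator_of_mem hxs, ← hx,
        Measure.map_apply (hgx_meas x) ht]
    · have hset : Prod.mk x ⁻¹' ((fun q : X × ℝ => (q.1, g q)) ⁻¹' (s ×ˢ t)) = ∅ := by
        ext y
        simp [hg, Set.mem_preimage, hxs]
      rw [hset, Set.indicator_of_notMem hxs]
      simp
  rw [lintegral_congr_ae hint, lintegral_indicator_const hs, mul_comm]
end

section
/- Let ρ be a Borel probability measure on ℝ², let ρ₁ be its first marginal with cumulative distribution function F₁(x) = ρ₁((−∞, x]), let (ρ_x)_{x ∈ ℝ} be the disintegration of ρ with respect to its first coordinate, and let F_{ρ,x}(y) = ρ_x((−∞, y]). Assume ρ₁ is atomless and ρ_x is atomless for ρ₁-almost every x. Then the pushforward of ρ under the Darmois map k(x, y) = (F₁(x), F_{ρ,x}(y)) is the uniform distribution on the unit square [0, 1]², i.e., two-dimensional Lebesgue measure restricted to [0, 1]². -/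
open MeasureTheory ProbabilityTheory

open MeasureTheory ProbabilityTheory Set Filter

lemma map_toReal_Iic_eq_uniform (μ : Measure ℝ) [IsProbabilityMeasure μ]
    (h : ∀ x : ℝ, μ {x} = 0) :
    μ.map (fun x => (μ (Iic x)).toReal) = volume.restrict (Icc (0:ℝ) 1) := by
  have hFdef : (fun x => (μ (Iic x)).toReal) = fun x => cdf μ x := by
    funext x; rw [cdf_eq_real, measureReal_def]
  have hmono : Monotone fun x => cdf μ x := monotone_cdf μ
  have hcont : Continuous fun x => cdf μ x := by
    rw [continuous_iff_continuousAt]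
    intro x
    have hl : Function.leftLim (fun x => cdf μ x) x = cdf μ x := by
      have h0 : (cdf μ).measure {x} = 0 := by rw [measure_cdf]; exact h x
      rw [StieltjesFunction.measure_singleton] at h0
      have h1 : cdf μ x - Function.leftLim (cdf μ) x ≤ 0 := by
        simpa [ENNReal.ofReal_eq_zero] using h0
      have h2 : Function.leftLim (⇑(cdf μ)) x ≤ cdf μ x :=
        Monotone.leftLim_le (monotone_cdf μ) le_rfl
      have h3 : Function.leftLim (⇑(cdf μ)) x = cdf μ x := le_antisymm h2 (by linarith)
      exact h3
    have hr : Function.rightLim (fun x => cdf μ x) x = cdf μ x := (cdf μ).rightLim_eq x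
    rw [hmono.continuousAt_iff_leftLim_eq_rightLim, hl, hr]
  have hIic : ∀ x, μ (Iic x) = ENNReal.ofReal (cdf μ x) := fun x => (ofReal_cdf μ x).symm
  have key : ∀ t : ℝ, 0 ≤ t → t < 1 → μ {x | cdf μ x ≤ t} = ENNReal.ofReal t := by
    intro t ht0 ht1
    obtain ⟨b, hb⟩ : ∃ b, t < cdf μ b :=
      ((tendsto_cdf_atTop μ).eventually (eventually_gt_nhds ht1)).exists
    have hub : μ {x | cdf μ x ≤ t} ≤ ENNReal.ofReal t := by
      rcases Set.eq_empty_or_nonempty {x | cdf μ x ≤ t} with he | hne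
      · simp [he]
      · have hbdd : BddAbove {x | cdf μ x ≤ t} := by
          refine ⟨b, fun x hx => ?_⟩
          by_contra hxb
          push_neg at hxb
          exact absurd (hmono hxb.le) (not_le.2 (lt_of_le_of_lt hx hb))
        have hclosed : IsClosed {x | cdf μ x ≤ t} := isClosed_le hcont continuous_const
        have hmem : sSup {x | cdf μ x ≤ t} ∈ {x | cdf μ x ≤ t} := hclosed.csSup_mem hne hbdd
        calc μ {x | cdf μ x ≤ t} ≤ μ (Iic (sSup {x | cdf μ x ≤ t})) :=
              measure_mono (fun x hx => le_csSup hbdd hx)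
          _ = ENNReal.ofReal (cdf μ (sSup {x | cdf μ x ≤ t})) := hIic _
          _ ≤ ENNReal.ofReal t := ENNReal.ofReal_le_ofReal hmem
    have hlb : ENNReal.ofReal t ≤ μ {x | cdf μ x ≤ t} := by
      rcases eq_or_lt_of_le ht0 with h0 | h0
      · simp [← h0]
      · obtain ⟨a, ha⟩ : ∃ a, cdf μ a < t :=
          ((tendsto_cdf_atBot μ).eventually (eventually_lt_nhds h0)).exists
        have hab : a ≤ b := by
          by_contra hba
          push_neg at hba
          exact absurd (hmono hba.le) (not_le.2 (ha.trans hb))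
        obtain ⟨x₀, _, hx₀⟩ := intermediate_value_Icc hab hcont.continuousOn ⟨ha.le, hb.le⟩
        calc ENNReal.ofReal t = μ (Iic x₀) := by rw [hIic]; exact congrArg ENNReal.ofReal hx₀.symm
          _ ≤ μ {x | cdf μ x ≤ t} :=
            measure_mono (fun y hy => by simpa using hx₀ ▸ hmono (mem_Iic.1 hy))
    exact le_antisymm hub hlb
  rw [hFdef]
  have hpr : IsProbabilityMeasure (volume.restrict (Icc (0:ℝ) 1)) := by
    constructor
    simp [Real.volume_Icc]
  have hm : Measurable fun x => cdf μ x := hcont.measurable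
  have hpm : IsProbabilityMeasure (μ.map fun x => cdf μ x) :=
    Measure.isProbabilityMeasure_map hm.aemeasurable
  refine Measure.ext_of_Iic _ _ fun t => ?_
  rw [Measure.map_apply hm measurableSet_Iic, Measure.restrict_apply measurableSet_Iic]
  rcases lt_or_ge t 0 with h0 | h0
  · have h1 : (fun x => cdf μ x) ⁻¹' Iic t = ∅ :=
      eq_empty_of_forall_notMem fun x hx => absurd (le_trans (cdf_nonneg μ x) hx) (not_le.2 h0)
    have h2 : Iic t ∩ Icc (0:ℝ) 1 = ∅ :=
      eq_empty_of_forall_notMem fun x hx => absurd (le_trans hx.2.1 hx.1) (not_le.2 h0)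
    rw [h1, h2]
    simp
  · rcases lt_or_ge t 1 with h1 | h1
    · have h2 : Iic t ∩ Icc (0:ℝ) 1 = Icc 0 t := by
        ext x
        simp only [mem_inter_iff, mem_Iic, mem_Icc]
        constructor
        · rintro ⟨hx, hx0, _⟩; exact ⟨hx0, hx⟩
        · rintro ⟨hx0, hx⟩; exact ⟨hx, hx0, hx.trans h1.le⟩
      have h3 : (fun x => cdf μ x) ⁻¹' Iic t = {x | cdf μ x ≤ t} := rfl
      rw [h3, key t h0 h1, h2, Real.volume_Icc, sub_zero]
    · have h2 : (fun x => cdf μ x) ⁻¹' Iic t = univ :=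
        eq_univ_of_forall fun x => (cdf_le_one μ x).trans h1
      have h3 : Iic t ∩ Icc (0:ℝ) 1 = Icc 0 1 :=
        inter_eq_self_of_subset_right (fun x hx => mem_Iic.2 (hx.2.trans h1))
      rw [h2, h3, measure_univ, Real.volume_Icc]
      simp

/-- Let `ρ` be a Borel probability measure on `ℝ²`, `ρ₁` its first marginal
with CDF `F₁(x) = ρ₁((−∞, x])`, and `(ρ_x)_{x ∈ ℝ}`, given by a Markov kernel `κ` with
`ρ₁ ⊗ κ = ρ`, the disintegration of `ρ` with respect to its first coordinate, with conditional
CDFs `F_{ρ,x}(y) = ρ_x((−∞, y])`. If `ρ₁` is atomless and `ρ_x` is atomless for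
`ρ₁`-almost every `x`, then the pushforward of `ρ` under the Darmois map
`k(x, y) = (F₁(x), F_{ρ,x}(y))` is the uniform distribution on the unit square `[0,1]²`,
i.e. two-dimensional Lebesgue measure restricted to `[0,1]²`. -/
theorem darmois_map_pushforward_uniform_square
    (ρ : Measure (ℝ × ℝ)) [IsProbabilityMeasure ρ]
    (h1_atomless : ∀ x : ℝ, ρ.fst {x} = 0)
    (κ : Kernel ℝ ℝ) [IsMarkovKernel κ]
    (hκ : ρ.fst ⊗ₘ κ = ρ)
    (h_atomless : ∀ᵐ x ∂ρ.fst, ∀ y : ℝ, κ x {y} = 0) :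
    ρ.map (fun q : ℝ × ℝ =>
        ((ρ.fst (Set.Iic q.1)).toReal, (κ q.1 (Set.Iic q.2)).toReal))
      = volume.restrict (Set.Icc (0 : ℝ) 1 ×ˢ Set.Icc (0 : ℝ) 1) := by
  obtain ⟨μ, hμ⟩ : ∃ μ : Measure ℝ, ρ.fst = μ := ⟨ρ.fst, rfl⟩
  have hprobμ : IsProbabilityMeasure μ := hμ ▸ inferInstance
  rw [hμ] at h1_atomless h_atomless hκ ⊢
  have hmap1 : μ.map (fun x => (μ (Iic x)).toReal) = volume.restrict (Icc (0:ℝ) 1) :=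
    map_toReal_Iic_eq_uniform μ h1_atomless
  have hmap2 : ∀ᵐ x ∂μ,
      (κ x).map (fun y => (κ x (Iic y)).toReal) = volume.restrict (Icc (0:ℝ) 1) := by
    filter_upwards [h_atomless] with x hx
    exact map_toReal_Iic_eq_uniform (κ x) hx
  have hF1 : Measurable fun x : ℝ => (μ (Iic x)).toReal := by
    apply Monotone.measurable
    intro a b hab
    exact ENNReal.toReal_mono (measure_ne_top _ _) (measure_mono (Iic_subset_Iic.2 hab))
  have hmeasFx : ∀ x : ℝ, Measurable fun y => (κ x (Iic y)).toReal := by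
    intro x
    apply Monotone.measurable
    intro a b hab
    exact ENNReal.toReal_mono (measure_ne_top _ _) (measure_mono (Iic_subset_Iic.2 hab))
  have hF2 : Measurable fun q : ℝ × ℝ => κ q.1 (Iic q.2) := by
    have ht : MeasurableSet {p : (ℝ × ℝ) × ℝ | p.2 ≤ p.1.2} :=
      measurableSet_le measurable_snd measurable_fst.snd
    have h := Kernel.measurable_kernel_prodMk_left
      (κ := κ.comap (Prod.fst : ℝ × ℝ → ℝ) measurable_fst) ht
    simp [Kernel.comap_apply] at h; exact h
  have hk : Measurable fun q : ℝ × ℝ =>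
      ((μ (Iic q.1)).toReal, (κ q.1 (Iic q.2)).toReal) :=
    (hF1.comp measurable_fst).prodMk hF2.ennreal_toReal
  have hfin : IsFiniteMeasure (volume.restrict (Icc (0:ℝ) 1)) := by
    constructor
    simp [Real.volume_Icc]
  have hprodIcc : volume.restrict (Icc (0:ℝ) 1 ×ˢ Icc (0:ℝ) 1)
      = (volume.restrict (Icc (0:ℝ) 1)).prod (volume.restrict (Icc (0:ℝ) 1)) := by
    rw [Measure.volume_eq_prod, Measure.prod_restrict]
  rw [hprodIcc]
  refine (Measure.prod_eq fun s t hs ht => ?_).symm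
  rw [Measure.map_apply hk (hs.prod ht), ← hκ, Measure.compProd_apply (hk (hs.prod ht))]
  have hae : ∀ᵐ x ∂μ,
      κ x (Prod.mk x ⁻¹' ((fun q : ℝ × ℝ =>
          ((μ (Iic q.1)).toReal, (κ q.1 (Iic q.2)).toReal)) ⁻¹' (s ×ˢ t)))
        = ((fun x' => (μ (Iic x')).toReal) ⁻¹' s).indicator
            (fun _ => volume.restrict (Icc (0:ℝ) 1) t) x := by
    filter_upwards [hmap2] with x hx
    by_cases hxs : (μ (Iic x)).toReal ∈ s
    · have hpre : Prod.mk x ⁻¹' ((fun q : ℝ × ℝ =>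
          ((μ (Iic q.1)).toReal, (κ q.1 (Iic q.2)).toReal)) ⁻¹' (s ×ˢ t))
          = (fun y => (κ x (Iic y)).toReal) ⁻¹' t := by
        ext y; simp [hxs]
      rw [hpre, ← Measure.map_apply (hmeasFx x) ht, hx,
        Set.indicator_of_mem (show x ∈ (fun x' => (μ (Iic x')).toReal) ⁻¹' s from hxs)]
    · have hpre : Prod.mk x ⁻¹' ((fun q : ℝ × ℝ =>
          ((μ (Iic q.1)).toReal, (κ q.1 (Iic q.2)).toReal)) ⁻¹' (s ×ˢ t)) = ∅ := by
        ext y; simp [hxs]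
      rw [hpre, Set.indicator_of_notMem (show x ∉ (fun x' => (μ (Iic x')).toReal) ⁻¹' s from hxs)]
      simp
  rw [lintegral_congr_ae hae, lintegral_indicator (hF1 hs), setLIntegral_const,
    ← Measure.map_apply hF1 hs, hmap1, mul_comm]
end
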